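/- arXiv:2303.01071 — 6 statements merged into one kernel-verified Lean document; each statement's English description precedes it below -/
import Mathlib

section
/- For all real numbers θ₁ and θ₂, one has |v(θ₁) − v(θ₂)| ≥ min(‖θ₁ − θ₂‖, ‖θ₁ + θ₂‖)². -/
open scoped InnerProductSpace

/-- `‖t‖`: the distance from a real number `t` to the nearest integer. -/
noncomputable def distToInt (t : ℝ) : ℝ := |t - round t|

/-- The ℓ¹ norm `‖x‖₁ = Σᵢ |xᵢ|` on `ℤ^d`. -/
def nrm1 {d : ℕ} (x : Fin d → ℤ) : ℤ := ∑ i, |x i|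

/-- The dot product `x·ω` for `x ∈ ℤ^d`, `ω ∈ ℝ^d`. -/
noncomputable def dotw {d : ℕ} (x : Fin d → ℤ) (ω : Fin d → ℝ) : ℝ := ∑ i, (x i : ℝ) * ω i

/-- The ℓ¹ norm on `ℝ^d`. -/
noncomputable def nrm1R {d : ℕ} (x : Fin d → ℝ) : ℝ := ∑ i, |x i|

/-- The dot product on `ℝ^d`. -/
noncomputable def dotwR {d : ℕ} (x ω : Fin d → ℝ) : ℝ := ∑ i, x i * ω i

/-- The standing hypotheses on the `C²`-cosine like potential `v` with parameter `a`:
`v` is `C²`, even and `1`-periodic, `0` is a nondegenerate maximum, `1/2` is a nondegenerate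
minimum, these are the only critical points modulo `1`, `|v''| > 3` near `0` and `1/2`
(within distance `a`), and `|v'| > 3` away from `0` and `1/2`. -/
structure CosLike (v : ℝ → ℝ) (a : ℝ) : Prop where
  smooth : ContDiff ℝ 2 v
  even : ∀ θ, v (-θ) = v θ
  periodic : ∀ θ, v (θ + 1) = v θ
  a_pos : 0 < a
  a_lt : a < 1 / 10
  critMax : deriv v 0 = 0
  critMax' : deriv (deriv v) 0 < 0
  critMin : deriv v (1 / 2) = 0
  critMin' : 0 < deriv (deriv v) (1 / 2)
  onlyCrit : ∀ θ ∈ Set.Ico (0 : ℝ) 1, deriv v θ = 0 → θ = 0 ∨ θ = 1 / 2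
  deriv2_big : ∀ θ, (distToInt θ < a ∨ distToInt (θ - 1 / 2) < a) → 3 < |deriv (deriv v) θ|
  deriv_big : ∀ θ, a ≤ distToInt θ → a ≤ distToInt (θ - 1 / 2) → 3 < |deriv v θ|

/-- `M₁ = sup_θ max(|v(θ)|, |v'(θ)|, |v''(θ)|)`. -/
noncomputable def M1 (v : ℝ → ℝ) : ℝ :=
  ⨆ θ : ℝ, max |v θ| (max |deriv v θ| |deriv (deriv v) θ|)

/-- The finite-volume Schrödinger operator `H_Λ(θ) = ε Δ + v(θ + x·ω) δ_{x,y}` as a matrix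
indexed by a finite set `Λ ⊂ ℤ^d`. -/
noncomputable def Hmat {d : ℕ} (ε : ℝ) (v : ℝ → ℝ) (ω : Fin d → ℝ) (θ : ℝ)
    (Λ : Finset (Fin d → ℤ)) : Matrix Λ Λ ℝ :=
  Matrix.of fun x y =>
    if nrm1 (x.1 - y.1) = 1 then ε
    else if x = y then v (θ + dotw x.1 ω) else 0

/-- The discrete ℓ¹-ball `{x ∈ ℤ^d : ‖x − c‖₁ ≤ r}` as a `Finset`. -/
noncomputable def ball1 {d : ℕ} (c : Fin d → ℤ) (r : ℝ) : Finset (Fin d → ℤ) :=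
  (Finset.Icc (fun i => c i - ⌈r⌉) (fun i => c i + ⌈r⌉)).filter
    fun x => ((nrm1 (x - c) : ℤ) : ℝ) ≤ r

/-- The discrete ℓ¹-ball around a (possibly non-integer) center `c ∈ ℝ^d`. -/
noncomputable def ballR {d : ℕ} (c : Fin d → ℝ) (r : ℝ) : Finset (Fin d → ℤ) :=
  (Finset.Icc (fun i => ⌊c i - r⌋ - 1) (fun i => ⌈c i + r⌉ + 1)).filter
    fun x => nrm1R (fun i => (x i : ℝ) - c i) ≤ r

/-- The nearest neighbours of `x` in `ℤ^d`. -/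
noncomputable def nbrs {d : ℕ} (x : Fin d → ℤ) : Finset (Fin d → ℤ) :=
  (Finset.Icc (fun i => x i - 1) (fun i => x i + 1)).filter fun y => nrm1 (y - x) = 1

/-- `δ₀ = ε₀^{1/20}`. -/
noncomputable def delta0 (ε₀ : ℝ) : ℝ := ε₀ ^ ((1 : ℝ) / 20)

/-! Evenness and periodicity give `v θ = v ‖θ‖`, and `min (‖θ₁ - θ₂‖, ‖θ₁ + θ₂‖) ≤ |‖θ₁‖ - ‖θ₂‖|`,
so it suffices to show `(t₂ - t₁)² ≤ v t₁ - v t₂` for `0 ≤ t₁ ≤ t₂ ≤ 1/2`. Integrating the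
curvature bounds from the critical points `0` and `1/2` gives `-v' ≥ 3t` on `[0, a]` and
`-v' ≥ 3 (1/2 - t)` on `[1/2 - a, 1/2]`, and by connectedness `v' < -3` on `[a, 1/2 - a]`.
Hence `-v' ≥ 2 (t - t₁)` on `[t₁, 1/2 - a]` and `-v' ≥ 2 (t₂ - t)` on `[a, t₂]`, which settles
the cases `t₂ ≤ 1/2 - a` and `a ≤ t₁`; otherwise the drop of `v` across `[a, 1/2 - a]` alone,
at least `3 (1/2 - 2a) > 1/4`, suffices. -/

lemma distToInt_le_abs_sub_intCast (x : ℝ) (n : ℤ) : distToInt x ≤ |x - n| :=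
  round_le x n

lemma distToInt_nonneg (x : ℝ) : 0 ≤ distToInt x :=
  abs_nonneg _

lemma distToInt_le_half (x : ℝ) : distToInt x ≤ 1 / 2 :=
  abs_sub_round x

lemma distToInt_eq_abs {x : ℝ} (hx : |x| ≤ 1 / 2) : distToInt x = |x| := by
  refine le_antisymm (by simpa using distToInt_le_abs_sub_intCast x 0) ?_
  rcases eq_or_ne x (1 / 2) with rfl | hne
  · norm_num [distToInt, round_eq]
  · have hround : round x = 0 :=
      round_eq_zero_iff.mpr ⟨(abs_le.mp hx).1, lt_of_le_of_ne (abs_le.mp hx).2 hne⟩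
    simp [distToInt, hround]

lemma min_abs_sub_abs_add_le_abs_abs_sub_abs (a b : ℝ) : min |a - b| |a + b| ≤ |(|a| - |b|)| := by
  rcases le_total 0 a with ha | ha <;> rcases le_total 0 b with hb | hb
  · simp [abs_of_nonneg ha, abs_of_nonneg hb]
  · rw [abs_of_nonneg ha, abs_of_nonpos hb, sub_neg_eq_add]
    exact min_le_right _ _
  · rw [abs_of_nonpos ha, abs_of_nonneg hb, ← abs_neg (a + b), neg_add', neg_sub_comm]
    exact min_le_right _ _
  · rw [abs_of_nonpos ha, abs_of_nonpos hb, ← abs_neg (a - b), neg_sub, sub_neg_eq_add,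
      neg_add_eq_sub]
    exact min_le_left _ _

lemma min_distToInt_sub_add_le (θ₁ θ₂ : ℝ) :
    min (distToInt (θ₁ - θ₂)) (distToInt (θ₁ + θ₂)) ≤ |distToInt θ₁ - distToInt θ₂| := by
  set s₁ := θ₁ - round θ₁
  set s₂ := θ₂ - round θ₂
  have hsub : distToInt (θ₁ - θ₂) ≤ |s₁ - s₂| := by
    simpa [s₁, s₂, sub_sub_sub_comm] using
      distToInt_le_abs_sub_intCast (θ₁ - θ₂) (round θ₁ - round θ₂)
  have hadd : distToInt (θ₁ + θ₂) ≤ |s₁ + s₂| := by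
    simpa [s₁, s₂, add_sub_add_comm] using
      distToInt_le_abs_sub_intCast (θ₁ + θ₂) (round θ₁ + round θ₂)
  exact (min_le_min hsub hadd).trans (min_abs_sub_abs_add_le_abs_abs_sub_abs s₁ s₂)

lemma sub_le_sub_of_hasDerivAt_le {f g f' g' : ℝ → ℝ} {x y : ℝ} (hxy : x ≤ y)
    (hf : ∀ t ∈ Set.Icc x y, HasDerivAt f (f' t) t) (hg : ∀ t ∈ Set.Icc x y, HasDerivAt g (g' t) t)
    (hle : ∀ t ∈ Set.Ioo x y, f' t ≤ g' t) : f y - f x ≤ g y - g x := by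
  have hderiv : ∀ t ∈ Set.Icc x y, HasDerivAt (g - f) (g' t - f' t) t :=
    fun t ht => (hg t ht).sub (hf t ht)
  have hmono : MonotoneOn (g - f) (Set.Icc x y) := by
    refine monotoneOn_of_hasDerivWithinAt_nonneg (f' := g' - f') (convex_Icc x y)
      (fun t ht => (hderiv t ht).continuousAt.continuousWithinAt) (fun t ht => ?_) (fun t ht => ?_)
    · exact (hderiv t (interior_subset ht)).hasDerivWithinAt
    · rw [interior_Icc] at ht
      exact sub_nonneg.mpr (hle t ht)
  have := hmono ⟨le_rfl, hxy⟩ ⟨hxy, le_rfl⟩ hxy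
  simp only [Pi.sub_apply] at this
  linarith

namespace CosLike

variable {v : ℝ → ℝ} {a : ℝ}

lemma apply_distToInt (hv : CosLike v a) (θ : ℝ) : v (distToInt θ) = v θ := by
  have hper : v (θ - round θ) = v θ := by
    simpa using ((Function.Periodic.int_mul hv.periodic (round θ)) (θ - round θ)).symm
  rcases le_total 0 (θ - round θ) with h | h
  · rw [distToInt, abs_of_nonneg h, hper]
  · rw [distToInt, abs_of_nonpos h, hv.even, hper]

lemma contDiff_deriv (hv : CosLike v a) : ContDiff ℝ 1 (deriv v) :=
  (contDiff_succ_iff_deriv.mp (show ContDiff ℝ (1 + 1) v from hv.smooth)).2.2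

lemma hasDerivAt (hv : CosLike v a) (t : ℝ) : HasDerivAt v (deriv v t) t :=
  (hv.smooth.differentiable (by norm_num) t).hasDerivAt

lemma hasDerivAt_deriv (hv : CosLike v a) (t : ℝ) : HasDerivAt (deriv v) (deriv (deriv v) t) t :=
  (hv.contDiff_deriv.differentiable one_ne_zero t).hasDerivAt

lemma continuous_deriv_deriv (hv : CosLike v a) : Continuous (deriv (deriv v)) :=
  hv.contDiff_deriv.continuous_deriv le_rfl

lemma deriv_deriv_lt_neg_three {t : ℝ} (hv : CosLike v a) (ht : t ∈ Set.Ico 0 a) :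
    deriv (deriv v) t < -3 := by
  have hbig : ∀ s ∈ Set.Ico 0 a, 3 < |deriv (deriv v) s| := fun s hs =>
    hv.deriv2_big s <| Or.inl <| by
      rw [distToInt_eq_abs (by rw [abs_of_nonneg hs.1]; linarith [hs.2, hv.a_lt]),
        abs_of_nonneg hs.1]
      exact hs.2
  have hzero : deriv (deriv v) 0 < -3 := by
    have := hbig 0 ⟨le_rfl, hv.a_pos⟩
    rwa [abs_of_neg hv.critMax', lt_neg] at this
  refine isPreconnected_Ico.gt_of_ne hv.continuous_deriv_deriv.continuousOn
    (fun s hs heq => ?_) ⟨0, ⟨le_rfl, hv.a_pos⟩, hzero⟩ ht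
  have := hbig s hs
  rw [heq] at this
  norm_num at this

lemma three_lt_deriv_deriv {t : ℝ} (hv : CosLike v a) (ht : t ∈ Set.Ioc (1 / 2 - a) (1 / 2)) :
    3 < deriv (deriv v) t := by
  have hbig : ∀ s ∈ Set.Ioc (1 / 2 - a) (1 / 2), 3 < |deriv (deriv v) s| := fun s hs =>
    hv.deriv2_big s <| Or.inr <| by
      rw [distToInt_eq_abs (by rw [abs_of_nonpos (by linarith [hs.2])]; linarith [hs.1, hv.a_lt]),
        abs_of_nonpos (by linarith [hs.2])]
      linarith [hs.1]
  have hhalf : 3 < deriv (deriv v) (1 / 2) := by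
    have := hbig (1 / 2) ⟨by linarith [hv.a_pos], le_rfl⟩
    rwa [abs_of_pos hv.critMin'] at this
  refine isPreconnected_Ioc.lt_of_ne hv.continuous_deriv_deriv.continuousOn
    (fun s hs heq => ?_) ⟨1 / 2, ⟨by linarith [hv.a_pos], le_rfl⟩, hhalf⟩ ht
  have := hbig s hs
  rw [heq] at this
  norm_num at this

lemma deriv_le_neg_three_mul {t : ℝ} (hv : CosLike v a) (ht : t ∈ Set.Icc 0 a) :
    deriv v t ≤ -3 * t := by
  have := sub_le_sub_of_hasDerivAt_le (g := fun s => -3 * s) ht.1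
    (fun s _ => hv.hasDerivAt_deriv s) (fun s _ => (hasDerivAt_id s).const_mul (-3))
    (fun s hs => by
      simpa using (hv.deriv_deriv_lt_neg_three ⟨hs.1.le, hs.2.trans_le ht.2⟩).le)
  simpa [hv.critMax] using this

lemma deriv_le_neg_three_mul_half_sub {t : ℝ} (hv : CosLike v a)
    (ht : t ∈ Set.Icc (1 / 2 - a) (1 / 2)) : deriv v t ≤ -3 * (1 / 2 - t) := by
  have := sub_le_sub_of_hasDerivAt_le (f := fun s => 3 * s) ht.2
    (fun s _ => (hasDerivAt_id s).const_mul 3) (fun s _ => hv.hasDerivAt_deriv s)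
    (fun s hs => by
      simpa using (hv.three_lt_deriv_deriv ⟨ht.1.trans_lt hs.1, hs.2.le⟩).le)
  rw [hv.critMin] at this
  linarith

lemma deriv_le_neg_three {t : ℝ} (hv : CosLike v a) (ht : t ∈ Set.Icc a (1 / 2 - a)) :
    deriv v t ≤ -3 := by
  have ha := hv.a_pos
  have ha' := hv.a_lt
  have hbig : ∀ s ∈ Set.Icc a (1 / 2 - a), 3 < |deriv v s| := fun s hs => by
    refine hv.deriv_big s ?_ ?_
    · rw [distToInt_eq_abs (by rw [abs_of_nonneg (by linarith [hs.1])]; linarith [hs.2]),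
        abs_of_nonneg (by linarith [hs.1])]
      exact hs.1
    · rw [distToInt_eq_abs (by rw [abs_of_nonpos (by linarith [hs.2])]; linarith [hs.1]),
        abs_of_nonpos (by linarith [hs.2])]
      linarith [hs.2]
  have hmem : a ∈ Set.Icc a (1 / 2 - a) := ⟨le_rfl, by linarith⟩
  have hleft : deriv v a < -3 := by
    have hneg : deriv v a < 0 := by linarith [hv.deriv_le_neg_three_mul ⟨ha.le, le_rfl⟩]
    have := hbig a hmem
    rwa [abs_of_neg hneg, lt_neg] at this
  refine (isPreconnected_Icc.gt_of_ne hv.contDiff_deriv.continuous.continuousOn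
    (fun s hs heq => ?_) ⟨a, hmem, hleft⟩ ht).le
  have := hbig s hs
  rw [heq] at this
  norm_num at this

lemma sq_sub_le_sub_of_le_half_sub {t₁ t₂ : ℝ} (hv : CosLike v a) (h₁ : 0 ≤ t₁) (h₁₂ : t₁ ≤ t₂)
    (h₂ : t₂ ≤ 1 / 2 - a) : (t₂ - t₁) ^ 2 ≤ v t₁ - v t₂ := by
  have := sub_le_sub_of_hasDerivAt_le (f := fun s => (s - t₁) ^ 2) (g := fun s => -v s)
    (f' := fun s => 2 * (s - t₁)) h₁₂
    (fun s _ => by simpa using ((hasDerivAt_id s).sub_const t₁).fun_pow 2)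
    (fun s _ => (hv.hasDerivAt s).neg) (fun s hs => ?_)
  · rw [sub_self, zero_pow two_ne_zero] at this
    linarith
  rcases le_total s a with hsa | has
  · have := hv.deriv_le_neg_three_mul ⟨h₁.trans hs.1.le, hsa⟩
    linarith [hs.1]
  · have := hv.deriv_le_neg_three ⟨has, hs.2.le.trans h₂⟩
    linarith [hs.1, hs.2, hv.a_pos]

lemma sq_sub_le_sub_of_le {t₁ t₂ : ℝ} (hv : CosLike v a) (h₁ : a ≤ t₁) (h₁₂ : t₁ ≤ t₂)
    (h₂ : t₂ ≤ 1 / 2) : (t₂ - t₁) ^ 2 ≤ v t₁ - v t₂ := by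
  have := sub_le_sub_of_hasDerivAt_le (f := fun s => -(t₂ - s) ^ 2) (g := fun s => -v s)
    (f' := fun s => 2 * (t₂ - s)) h₁₂
    (fun s _ => by simpa using (((hasDerivAt_id s).const_sub t₂).fun_pow 2).fun_neg)
    (fun s _ => (hv.hasDerivAt s).neg) (fun s hs => ?_)
  · rw [sub_self, zero_pow two_ne_zero] at this
    linarith
  rcases le_total s (1 / 2 - a) with hsa | has
  · have := hv.deriv_le_neg_three ⟨h₁.trans hs.1.le, hsa⟩
    linarith [hs.1, hs.2, hv.a_pos]
  · have := hv.deriv_le_neg_three_mul_half_sub ⟨has, hs.2.le.trans h₂⟩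
    linarith [hs.1, hs.2]

lemma three_mul_half_sub_two_mul_le (hv : CosLike v a) :
    3 * (1 / 2 - 2 * a) ≤ v a - v (1 / 2 - a) := by
  have := sub_le_sub_of_hasDerivAt_le (f := fun s => 3 * s) (g := fun s => -v s)
    (by linarith [hv.a_lt] : a ≤ 1 / 2 - a)
    (fun s _ => (hasDerivAt_id s).const_mul 3) (fun s _ => (hv.hasDerivAt s).neg)
    (fun s hs => by linarith [hv.deriv_le_neg_three ⟨hs.1.le, hs.2.le⟩])
  linarith

lemma sq_sub_le_sub {t₁ t₂ : ℝ} (hv : CosLike v a) (h₁ : 0 ≤ t₁) (h₁₂ : t₁ ≤ t₂)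
    (h₂ : t₂ ≤ 1 / 2) : (t₂ - t₁) ^ 2 ≤ v t₁ - v t₂ := by
  rcases le_total t₂ (1 / 2 - a) with h₂' | h₂'
  · exact hv.sq_sub_le_sub_of_le_half_sub h₁ h₁₂ h₂'
  rcases le_total a t₁ with h₁' | h₁'
  · exact hv.sq_sub_le_sub_of_le h₁' h₁₂ h₂
  have hleft := hv.sq_sub_le_sub_of_le_half_sub h₁ h₁' (by linarith [hv.a_lt])
  have hright := hv.sq_sub_le_sub_of_le (by linarith [hv.a_lt]) h₂' h₂
  have hmid := hv.three_mul_half_sub_two_mul_le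
  nlinarith [hv.a_lt, sq_nonneg (a - t₁), sq_nonneg (t₂ - (1 / 2 - a))]

lemma sq_abs_sub_le_abs_sub {t₁ t₂ : ℝ} (hv : CosLike v a) (h₁ : t₁ ∈ Set.Icc 0 (1 / 2))
    (h₂ : t₂ ∈ Set.Icc 0 (1 / 2)) : |t₁ - t₂| ^ 2 ≤ |v t₁ - v t₂| := by
  rcases le_total t₁ t₂ with h | h
  · rw [abs_sub_comm, sq_abs]
    exact (hv.sq_sub_le_sub h₁.1 h h₂.2).trans (le_abs_self _)
  · rw [sq_abs, abs_sub_comm]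
    exact (hv.sq_sub_le_sub h₂.1 h h₁.2).trans (le_abs_self _)

end CosLike

/-- For all real numbers `θ₁` and `θ₂`,
`|v(θ₁) − v(θ₂)| ≥ min(‖θ₁ − θ₂‖, ‖θ₁ + θ₂‖)²`. -/
theorem statement0 (v : ℝ → ℝ) (a : ℝ) (hv : CosLike v a) :
    ∀ θ₁ θ₂ : ℝ,
      min (distToInt (θ₁ - θ₂)) (distToInt (θ₁ + θ₂)) ^ 2 ≤ |v θ₁ - v θ₂| := by
  intro θ₁ θ₂
  have hmem : ∀ θ, distToInt θ ∈ Set.Icc 0 (1 / 2) := fun θ =>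
    ⟨distToInt_nonneg θ, distToInt_le_half θ⟩
  calc min (distToInt (θ₁ - θ₂)) (distToInt (θ₁ + θ₂)) ^ 2
      ≤ |distToInt θ₁ - distToInt θ₂| ^ 2 :=
        pow_le_pow_left₀ (le_min (distToInt_nonneg _) (distToInt_nonneg _))
          (min_distToInt_sub_add_le θ₁ θ₂) 2
    _ ≤ |v (distToInt θ₁) - v (distToInt θ₂)| := hv.sq_abs_sub_le_abs_sub (hmem θ₁) (hmem θ₂)
    _ = |v θ₁ - v θ₂| := by rw [hv.apply_distToInt, hv.apply_distToInt]
end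

section
/- (Green's function estimates at step 0.) There exists ε₀* > 0 depending only on v and d such that for all 0 < ε₀ ≤ ε₀* and all 0 < ε ≤ ε₀ the following holds. If a finite set Λ ⊂ ℤ^d satisfies Λ ∩ Q₀ = ∅, then for every θ with |θ − θ*| < δ₀/(10M₁) and every E with |E − E*| < δ₀/5, the matrix H_Λ(θ) − E is invertible, its inverse G_Λ(θ;E) has operator norm at most 10δ₀⁻¹, and |G_Λ(θ;E)(x, y)| ≤ e^{−γ₀‖x−y‖₁} for all x ≠ y in Λ, where γ₀ = (1/2)|log ε|. -/
open scoped InnerProductSpace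

/-!
Off `Q₀` every diagonal entry `v(θ + x·ω) − E` of `H_Λ(θ) − E` has modulus at least `7δ₀/10`,
because `v` is `M₁`-Lipschitz and `θ, E` are close to `θ*, E*`; the hopping part `εΔ` has ℓ²
norm at most `2dε` by the Schur test. Hence `H_Λ(θ) − E` is bounded below by `δ₀/10` on ℓ².
For the decay, row `x` of `(D + εΔ) G = 1` writes `G(x, y)`, `x ≠ y`, as a combination of the
`G(z, y)` over the neighbours `z` of `x` with total weight at most `2dε / |D(x)|`; iterating
`‖x − y‖₁` times gains `(2dε / (7δ₀/10))^{‖x−y‖₁} ≤ ε^{‖x−y‖₁/2} · δ₀/10` as soon as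
`ε ≤ δ₀^20` and `δ₀ ≤ 1/(40(d+1))`.
-/

theorem Function.Periodic.deriv {𝕜 F : Type*} [NontriviallyNormedField 𝕜] [NormedAddCommGroup F]
    [NormedSpace 𝕜 F] {f : 𝕜 → F} {c : 𝕜} (h : Function.Periodic f c) :
    Function.Periodic (deriv f) c := fun x => by
  rw [← deriv_comp_add_const, funext h]

namespace CosLike

variable {v : ℝ → ℝ} {a : ℝ}

lemma bddAbove_range (hv : CosLike v a) :
    BddAbove (Set.range fun θ => max |v θ| (max |deriv v θ| |deriv (deriv v) θ|)) := by
  have hv' : ContDiff ℝ 1 (deriv v) := (contDiff_succ_iff_deriv.mp hv.smooth).2.2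
  have hper : Function.Periodic v 1 := hv.periodic
  refine (Function.Periodic.isBounded_of_continuous (c := 1) ?_ one_ne_zero ?_).bddAbove
  · intro θ
    simp only [hper θ, hper.deriv θ, hper.deriv.deriv θ]
  · exact hv.smooth.continuous.abs.max
      (hv'.continuous.abs.max (hv'.continuous_deriv le_rfl).abs)

lemma abs_deriv_le_M1 (hv : CosLike v a) (θ : ℝ) : |deriv v θ| ≤ M1 v :=
  (le_max_left _ _).trans <| (le_max_right _ _).trans <| le_ciSup hv.bddAbove_range θ

lemma abs_sub_le_M1_mul (hv : CosLike v a) (s t : ℝ) : |v s - v t| ≤ M1 v * |s - t| := by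
  simpa only [Real.norm_eq_abs] using convex_univ.norm_image_sub_le_of_norm_deriv_le
    (fun x _ => (hv.smooth.differentiable (by norm_num)).differentiableAt)
    (fun x _ => hv.abs_deriv_le_M1 x) (Set.mem_univ t) (Set.mem_univ s)

lemma le_abs_sub_of_abs_sub_lt (hv : CosLike v a) {δ θ θs E Es t : ℝ}
    (ht : δ ≤ |v (θs + t) - Es|) (hθ : |θ - θs| < δ / (10 * M1 v)) (hE : |E - Es| < δ / 5) :
    7 / 10 * δ ≤ |v (θ + t) - E| := by
  have hM : 0 < M1 v := by
    refine (abs_nonneg _).trans (hv.abs_deriv_le_M1 0) |>.lt_of_ne fun h => ?_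
    simp only [← h, mul_zero, div_zero] at hθ
    exact (abs_nonneg _).not_gt hθ
  have hshift : |v (θ + t) - v (θs + t)| < δ / 10 := by
    calc |v (θ + t) - v (θs + t)| ≤ M1 v * |θ - θs| := by
          simpa using hv.abs_sub_le_M1_mul (θ + t) (θs + t)
      _ < M1 v * (δ / (10 * M1 v)) := by gcongr
      _ = δ / 10 := by field_simp
  have hsplit : |(v (θs + t) - Es) - (v (θ + t) - E)| ≤ |v (θ + t) - v (θs + t)| + |E - Es| := by
    calc _ = |-(v (θ + t) - v (θs + t)) + (E - Es)| := by ring_nf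
      _ ≤ _ := by simpa only [abs_neg] using abs_add_le (-(v (θ + t) - v (θs + t))) (E - Es)
  linarith [abs_sub_abs_le_abs_sub (v (θs + t) - Es) (v (θ + t) - E)]

end CosLike

namespace Matrix

variable {ι 𝕜 : Type*} [Fintype ι] [DecidableEq ι]

section Euclidean

variable [RCLike 𝕜]

lemma norm_apply_le_norm_toEuclideanCLM (A : Matrix ι ι 𝕜) (x y : ι) :
    ‖A x y‖ ≤ ‖toEuclideanCLM (𝕜 := 𝕜) A‖ := by
  calc ‖A x y‖ = ‖toEuclideanCLM (𝕜 := 𝕜) A (WithLp.toLp 2 (Pi.single y 1)) x‖ := by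
        simp [mulVec_single]
    _ ≤ ‖toEuclideanCLM (𝕜 := 𝕜) A (WithLp.toLp 2 (Pi.single y 1))‖ := PiLp.norm_apply_le _ x
    _ ≤ ‖toEuclideanCLM (𝕜 := 𝕜) A‖ := by
        simpa using (toEuclideanCLM (𝕜 := 𝕜) A).le_opNorm (WithLp.toLp 2 (Pi.single y 1))

lemma mul_norm_le_norm_toEuclideanCLM_diagonal {c : ℝ} {w : ι → 𝕜} (hc : ∀ i, c ≤ ‖w i‖)
    (ψ : EuclideanSpace 𝕜 ι) : c * ‖ψ‖ ≤ ‖toEuclideanCLM (𝕜 := 𝕜) (diagonal w) ψ‖ := by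
  rcases lt_or_ge c 0 with hc0 | hc0
  · exact (mul_nonpos_of_nonpos_of_nonneg hc0.le (norm_nonneg ψ)).trans (norm_nonneg _)
  refine (sq_le_sq₀ (by positivity) (norm_nonneg _)).mp ?_
  simp only [mul_pow, EuclideanSpace.norm_sq_eq, ofLp_toEuclideanCLM, mulVec_diagonal,
    norm_mul, Finset.mul_sum]
  gcongr with i
  exact hc i

/-- The Schur test. -/
lemma norm_toEuclideanCLM_le_of_sum_norm_le {A : Matrix ι ι 𝕜} {s : ℝ} (hs : 0 ≤ s)
    (hrow : ∀ i, ∑ j, ‖A i j‖ ≤ s) (hcol : ∀ j, ∑ i, ‖A i j‖ ≤ s) :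
    ‖toEuclideanCLM (𝕜 := 𝕜) A‖ ≤ s := by
  refine ContinuousLinearMap.opNorm_le_bound _ hs fun ψ => ?_
  refine (sq_le_sq₀ (norm_nonneg _) (by positivity)).mp ?_
  have hrow_sq : ∀ i, ‖(A *ᵥ WithLp.ofLp ψ) i‖ ^ 2 ≤ s * ∑ j, ‖A i j‖ * ‖ψ j‖ ^ 2 := fun i => by
    calc ‖(A *ᵥ WithLp.ofLp ψ) i‖ ^ 2 ≤ (∑ j, ‖A i j‖ * ‖ψ j‖) ^ 2 := by
          gcongr
          exact (norm_sum_le _ _).trans_eq (by simp only [norm_mul])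
      _ ≤ (∑ j, ‖A i j‖) * ∑ j, ‖A i j‖ * ‖ψ j‖ ^ 2 :=
          Finset.sum_sq_le_sum_mul_sum_of_sq_le_mul _ (fun _ _ => norm_nonneg _)
            (fun _ _ => by positivity) (fun _ _ => le_of_eq (by ring))
      _ ≤ s * ∑ j, ‖A i j‖ * ‖ψ j‖ ^ 2 := by gcongr; exact hrow i
  calc ‖toEuclideanCLM (𝕜 := 𝕜) A ψ‖ ^ 2 = ∑ i, ‖(A *ᵥ WithLp.ofLp ψ) i‖ ^ 2 := by
        simp [EuclideanSpace.norm_sq_eq]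
    _ ≤ ∑ i, s * ∑ j, ‖A i j‖ * ‖ψ j‖ ^ 2 := Finset.sum_le_sum fun i _ => hrow_sq i
    _ = s * ∑ j, (∑ i, ‖A i j‖) * ‖ψ j‖ ^ 2 := by
        simp only [← Finset.mul_sum, Finset.sum_mul]
        rw [Finset.sum_comm]
    _ ≤ s * ∑ j, s * ‖ψ j‖ ^ 2 := by gcongr with j; exact hcol j
    _ = (s * ‖ψ‖) ^ 2 := by rw [mul_pow, EuclideanSpace.norm_sq_eq, ← Finset.mul_sum]; ring

lemma isUnit_and_norm_toEuclideanCLM_inv_le {T : Matrix ι ι 𝕜} {m : ℝ} (hm : 0 < m)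
    (hT : ∀ ψ, m * ‖ψ‖ ≤ ‖toEuclideanCLM (𝕜 := 𝕜) T ψ‖) :
    IsUnit T ∧ ‖toEuclideanCLM (𝕜 := 𝕜) T⁻¹‖ ≤ m⁻¹ := by
  have hunit : IsUnit T := by
    refine mulVec_injective_iff_isUnit.mp fun g g' hgg' => ?_
    have h := hT (WithLp.toLp 2 (g - g'))
    rw [toEuclideanCLM_toLp, mulVec_sub, hgg', sub_self, WithLp.toLp_zero, norm_zero,
      ← mul_zero m] at h
    have h0 := norm_le_zero_iff.mp (le_of_mul_le_mul_left h hm)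
    exact sub_eq_zero.mp (congrArg WithLp.ofLp h0)
  refine ⟨hunit, ContinuousLinearMap.opNorm_le_bound _ (by positivity) fun φ => ?_⟩
  have hTT : toEuclideanCLM (𝕜 := 𝕜) T (toEuclideanCLM (𝕜 := 𝕜) T⁻¹ φ) = φ := by
    change (toEuclideanCLM (𝕜 := 𝕜) T * toEuclideanCLM (𝕜 := 𝕜) T⁻¹) φ = φ
    rw [← map_mul, mul_nonsing_inv T ((isUnit_iff_isUnit_det T).mp hunit), map_one]
    rfl
  have := hT (toEuclideanCLM (𝕜 := 𝕜) T⁻¹ φ)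
  rw [hTT] at this
  rw [inv_mul_eq_div, le_div_iff₀ hm]
  linarith

lemma sub_mul_norm_le_norm_toEuclideanCLM_diagonal_add {c s : ℝ} {w : ι → 𝕜} {A : Matrix ι ι 𝕜}
    (hc : ∀ i, c ≤ ‖w i‖) (hA : ‖toEuclideanCLM (𝕜 := 𝕜) A‖ ≤ s) (ψ : EuclideanSpace 𝕜 ι) :
    (c - s) * ‖ψ‖ ≤ ‖toEuclideanCLM (𝕜 := 𝕜) (diagonal w + A) ψ‖ := by
  have hD := mul_norm_le_norm_toEuclideanCLM_diagonal hc ψ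
  have hAψ := (toEuclideanCLM (𝕜 := 𝕜) A).le_opNorm ψ
  have := norm_sub_norm_le (toEuclideanCLM (𝕜 := 𝕜) (diagonal w) ψ)
    (-toEuclideanCLM (𝕜 := 𝕜) A ψ)
  rw [sub_neg_eq_add, norm_neg] at this
  rw [map_add, _root_.add_apply]
  nlinarith [norm_nonneg ψ]

end Euclidean

section Decay

variable [NormedField 𝕜]

theorem norm_apply_le_pow_of_diagonal_add_mul_eq_one (ρ : ι → ι → ℤ)
    (hρ : ∀ x y z, ρ x y ≤ ρ x z + ρ z y) (hρ0 : ∀ x, ρ x x = 0)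
    {w : ι → 𝕜} {A G : Matrix ι ι 𝕜} {r M : ℝ} (hG : (diagonal w + A) * G = 1)
    (hw : ∀ x, w x ≠ 0) (hA : ∀ x z, 1 < ρ x z → A x z = 0)
    (hr : ∀ x, ∑ z, ‖A x z‖ ≤ r * ‖w x‖) (hM : ∀ x y, ‖G x y‖ ≤ M) :
    ∀ (k : ℕ) (x y : ι), (k : ℤ) ≤ ρ x y → ‖G x y‖ ≤ r ^ k * M := by
  intro k
  induction k with
  | zero => simpa using fun x y _ => hM x y
  | succ k ih =>
    intro x y hk
    have hxy : x ≠ y := by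
      rintro rfl
      rw [hρ0] at hk
      omega
    have hwx : 0 < ‖w x‖ := norm_pos_iff.mpr (hw x)
    have hr0 : 0 ≤ r := nonneg_of_mul_nonneg_left
      ((Finset.sum_nonneg fun z _ => norm_nonneg (A x z)).trans (hr x)) hwx
    have hrow : w x * G x y = -∑ z, A x z * G z y := by
      have := congrFun (congrFun hG x) y
      rw [add_mul, add_apply, diagonal_mul, mul_apply, one_apply_ne hxy] at this
      exact eq_neg_of_add_eq_zero_left this
    have hstep : ∀ z, ‖A x z‖ * ‖G z y‖ ≤ ‖A x z‖ * (r ^ k * M) := fun z => by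
      by_cases hz : 1 < ρ x z
      · simp [hA x z hz]
      · gcongr
        exact ih z y (by have := hρ x y z; push_cast at hk ⊢; omega)
    have : ‖w x‖ * ‖G x y‖ ≤ ‖w x‖ * (r ^ (k + 1) * M) := by
      calc ‖w x‖ * ‖G x y‖ = ‖∑ z, A x z * G z y‖ := by rw [← norm_mul, hrow, norm_neg]
        _ ≤ ∑ z, ‖A x z‖ * ‖G z y‖ := (norm_sum_le _ _).trans_eq (by simp only [norm_mul])
        _ ≤ ∑ z, ‖A x z‖ * (r ^ k * M) := Finset.sum_le_sum fun z _ => hstep z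
        _ ≤ r * ‖w x‖ * (r ^ k * M) := by
          rw [← Finset.sum_mul]
          exact mul_le_mul_of_nonneg_right (hr x)
            (mul_nonneg (pow_nonneg hr0 k) ((norm_nonneg _).trans (hM x x)))
        _ = ‖w x‖ * (r ^ (k + 1) * M) := by ring
    exact le_of_mul_le_mul_left this hwx

end Decay

end Matrix

section Lattice

variable {d : ℕ}

lemma nrm1_nonneg (z : Fin d → ℤ) : 0 ≤ nrm1 z :=
  Finset.sum_nonneg fun i _ => abs_nonneg (z i)

lemma nrm1_eq_zero_iff {z : Fin d → ℤ} : nrm1 z = 0 ↔ z = 0 := by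
  simp [nrm1, Finset.sum_eq_zero_iff_of_nonneg, funext_iff]

lemma nrm1_sub_comm (x y : Fin d → ℤ) : nrm1 (x - y) = nrm1 (y - x) := by
  simp only [nrm1, Pi.sub_apply, abs_sub_comm]

lemma nrm1_sub_le (x y z : Fin d → ℤ) : nrm1 (x - y) ≤ nrm1 (x - z) + nrm1 (z - y) := by
  simp only [nrm1, Pi.sub_apply, ← Finset.sum_add_distrib]
  exact Finset.sum_le_sum fun i _ => abs_sub_le _ _ _

lemma exists_eq_single_of_nrm1_eq_one {z : Fin d → ℤ} (hz : nrm1 z = 1) :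
    ∃ i, ∃ s ∈ ({1, -1} : Finset ℤ), z = Pi.single i s := by
  obtain ⟨i, hi⟩ : ∃ i, z i ≠ 0 := by
    by_contra! h
    simp [nrm1, h] at hz
  have hsplit := Finset.add_sum_erase Finset.univ (fun j => |z j|) (Finset.mem_univ i)
  have hrest : ∑ j ∈ Finset.univ.erase i, |z j| = 0 := by
    have := Int.one_le_abs hi
    have := Finset.sum_nonneg fun j (_ : j ∈ Finset.univ.erase i) => abs_nonneg (z j)
    unfold nrm1 at hz
    omega
  have hzero : ∀ j ≠ i, z j = 0 := fun j hj => abs_eq_zero.mp <|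
    (Finset.sum_eq_zero_iff_of_nonneg fun _ _ => abs_nonneg _).mp hrest j (by simp [hj])
  refine ⟨i, z i, ?_, funext fun j => ?_⟩
  · have : |z i| = 1 := by unfold nrm1 at hz; omega
    rcases abs_eq (zero_le_one' ℤ) |>.mp this with h | h <;> simp [h]
  · by_cases hj : j = i
    · subst hj; simp
    · simp [hj, hzero j hj]

lemma card_filter_nrm1_sub_eq_one_le (s : Finset (Fin d → ℤ)) (c : Fin d → ℤ) :
    (s.filter fun y => nrm1 (y - c) = 1).card ≤ 2 * d := by
  classical
  calc (s.filter fun y => nrm1 (y - c) = 1).card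
      ≤ ((Finset.univ ×ˢ ({1, -1} : Finset ℤ)).image fun p => c + Pi.single p.1 p.2).card := by
        refine Finset.card_le_card fun y hy => ?_
        obtain ⟨i, t, ht, hyc⟩ := exists_eq_single_of_nrm1_eq_one (Finset.mem_filter.mp hy).2
        exact Finset.mem_image.mpr ⟨(i, t), by simp [ht], by rw [← hyc]; abel⟩
    _ ≤ (Finset.univ ×ˢ ({1, -1} : Finset ℤ)).card := Finset.card_image_le
    _ = 2 * d := by simp [mul_comm]

noncomputable def latticeAdj (Λ : Finset (Fin d → ℤ)) : Matrix Λ Λ ℝ :=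
  Matrix.of fun x y => if nrm1 (x.1 - y.1) = 1 then 1 else 0

lemma sum_latticeAdj_le (Λ : Finset (Fin d → ℤ)) (x : Λ) : ∑ y, latticeAdj Λ x y ≤ 2 * d := by
  classical
  calc ∑ y, latticeAdj Λ x y = ∑ y ∈ Λ, if nrm1 (y - x.1) = 1 then (1 : ℝ) else 0 := by
        rw [← Finset.sum_coe_sort Λ]
        simp [latticeAdj, nrm1_sub_comm x.1]
    _ ≤ 2 * d := by
        rw [Finset.sum_boole]
        exact_mod_cast card_filter_nrm1_sub_eq_one_le Λ x.1

lemma latticeAdj_apply_comm (Λ : Finset (Fin d → ℤ)) (x y : Λ) :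
    latticeAdj Λ x y = latticeAdj Λ y x := by
  simp [latticeAdj, nrm1_sub_comm x.1]

lemma sum_norm_smul_latticeAdj_le {ε : ℝ} (hε : 0 ≤ ε) (Λ : Finset (Fin d → ℤ)) (x : Λ) :
    ∑ y, ‖(ε • latticeAdj Λ) x y‖ ≤ 2 * d * ε := by
  have hadj : ∀ y, 0 ≤ latticeAdj Λ x y := fun y => by
    simp only [latticeAdj, Matrix.of_apply]; split_ifs <;> norm_num
  simp only [Matrix.smul_apply, smul_eq_mul, norm_mul, Real.norm_of_nonneg hε,
    Real.norm_of_nonneg (hadj _), ← Finset.mul_sum]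
  nlinarith [sum_latticeAdj_le Λ x]

lemma norm_toEuclideanCLM_smul_latticeAdj_le {ε : ℝ} (hε : 0 ≤ ε) (Λ : Finset (Fin d → ℤ)) :
    ‖Matrix.toEuclideanCLM (𝕜 := ℝ) (ε • latticeAdj Λ)‖ ≤ 2 * d * ε :=
  Matrix.norm_toEuclideanCLM_le_of_sum_norm_le (by positivity) (sum_norm_smul_latticeAdj_le hε Λ)
    fun y => by
      simpa only [Matrix.smul_apply, latticeAdj_apply_comm Λ _ y] using
        sum_norm_smul_latticeAdj_le hε Λ y

lemma Hmat_sub_smul_one (ε : ℝ) (v : ℝ → ℝ) (ω : Fin d → ℝ) (θ E : ℝ) (Λ : Finset (Fin d → ℤ)) :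
    Hmat ε v ω θ Λ - E • 1
      = Matrix.diagonal (fun x : Λ => v (θ + dotw x.1 ω) - E) + ε • latticeAdj Λ := by
  ext x y
  by_cases hxy : x = y
  · subst hxy
    simp [Hmat, latticeAdj, nrm1]
  · by_cases h : nrm1 (x.1 - y.1) = 1 <;> simp [Hmat, latticeAdj, hxy, h]

end Lattice

theorem Hmat_sub_smul_one_inv_bounds {d : ℕ} {ε c θ E : ℝ} {v : ℝ → ℝ} {ω : Fin d → ℝ}
    {Λ : Finset (Fin d → ℤ)} (hε : 0 ≤ ε) (hc : ∀ x : Λ, c ≤ |v (θ + dotw x.1 ω) - E|)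
    (hεc : 2 * d * ε < c) :
    IsUnit (Hmat ε v ω θ Λ - E • 1) ∧
      ‖(Matrix.toEuclideanCLM (𝕜 := ℝ) (Hmat ε v ω θ Λ - E • 1)⁻¹ :
        EuclideanSpace ℝ Λ →L[ℝ] EuclideanSpace ℝ Λ)‖ ≤ (c - 2 * d * ε)⁻¹ ∧
      ∀ x y : Λ, |(Hmat ε v ω θ Λ - E • 1)⁻¹ x y|
        ≤ (2 * d * ε / c) ^ (nrm1 (x.1 - y.1)).toNat * (c - 2 * d * ε)⁻¹ := by
  rw [Hmat_sub_smul_one]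
  have hc0 : 0 < c := (by positivity : (0 : ℝ) ≤ 2 * d * ε).trans_lt hεc
  obtain ⟨hunit, hnorm⟩ := Matrix.isUnit_and_norm_toEuclideanCLM_inv_le (sub_pos.2 hεc)
    (Matrix.sub_mul_norm_le_norm_toEuclideanCLM_diagonal_add hc
      (norm_toEuclideanCLM_smul_latticeAdj_le hε Λ))
  refine ⟨hunit, hnorm, fun x y => ?_⟩
  simpa only [Real.norm_eq_abs] using
    Matrix.norm_apply_le_pow_of_diagonal_add_mul_eq_one (fun x y : Λ => nrm1 (x.1 - y.1))
      (fun x y z => nrm1_sub_le x.1 y.1 z.1) (fun x => by simp [nrm1])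
      (Matrix.mul_nonsing_inv _ ((Matrix.isUnit_iff_isUnit_det _).mp hunit))
      (fun x => abs_pos.mp (hc0.trans_le (hc x)))
      (fun x z h => by simp [latticeAdj, h.ne'])
      (fun x => (sum_norm_smul_latticeAdj_le hε Λ x).trans <| by
        rw [div_mul_eq_mul_div, le_div_iff₀ hc0]; gcongr; exact hc x)
      (fun x y => (Matrix.norm_apply_le_norm_toEuclideanCLM _ x y).trans hnorm)
      _ x y (Int.toNat_of_nonneg (nrm1_nonneg _)).le

lemma delta0_pos {ε₀ : ℝ} (h : 0 < ε₀) : 0 < delta0 ε₀ := Real.rpow_pos_of_pos h _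

lemma delta0_pow {ε₀ : ℝ} (h : 0 ≤ ε₀) : delta0 ε₀ ^ 20 = ε₀ := by
  simpa [delta0] using Real.rpow_inv_natCast_pow h (n := 20) (by norm_num)

lemma delta0_le_of_le_pow {ε₀ κ : ℝ} (h : 0 ≤ ε₀) (hκ : 0 ≤ κ) (hle : ε₀ ≤ κ ^ 20) :
    delta0 ε₀ ≤ κ := by
  calc delta0 ε₀ ≤ (κ ^ 20) ^ ((20 : ℕ) : ℝ)⁻¹ := by
        simpa [delta0] using Real.rpow_le_rpow h hle (by norm_num : (0 : ℝ) ≤ 1 / 20)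
    _ = κ := Real.pow_rpow_inv_natCast hκ (by norm_num)

lemma sqrt_pow_eq_exp_neg_abs_log {ε : ℝ} (hε : 0 < ε) (hε1 : ε ≤ 1) (n : ℕ) :
    √ε ^ n = Real.exp (-(|Real.log ε| / 2) * n) := by
  rw [abs_of_nonpos (Real.log_nonpos hε.le hε1), neg_div, neg_neg, mul_comm, Real.exp_nat_mul,
    Real.sqrt_eq_rpow, Real.rpow_def_of_pos hε, mul_one_div]

lemma hopping_le_of_le_pow {d : ℕ} {δ ε : ℝ} (hδ : 0 < δ) (hδd : 40 * (d + 1) * δ ≤ 1)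
    (hε : 0 < ε) (hεδ : ε ≤ δ ^ 20) :
    2 * d * ε ≤ 6 / 10 * δ ∧ 2 * d * ε / (7 / 10 * δ) ≤ √ε * (δ / 10) := by
  have hd : (0 : ℝ) ≤ d := d.cast_nonneg
  have hδ1 : δ ≤ 1 := by nlinarith
  have hdδ : 2 * d * δ ≤ 1 / 20 := by nlinarith
  have hsqrt : √ε ≤ δ ^ 10 := Real.sqrt_le_iff.mpr ⟨by positivity, by rw [← pow_mul]; exact hεδ⟩
  have hδ8 : δ ^ 8 ≤ δ := pow_le_of_le_one hδ.le hδ1 (by norm_num)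
  constructor
  · have : ε ≤ δ * δ := hεδ.trans <| by
      rw [← sq]; exact pow_le_pow_of_le_one hδ.le hδ1 (by norm_num)
    nlinarith
  · rw [div_le_iff₀ (by positivity)]
    have hs := Real.sqrt_nonneg ε
    calc 2 * d * ε = 2 * d * √ε * √ε := by
          rw [mul_assoc (2 * (d : ℝ)) √ε √ε, Real.mul_self_sqrt hε.le]
      _ ≤ 2 * d * √ε * δ ^ 10 := by gcongr
      _ = √ε * δ ^ 2 * (2 * d * δ ^ 8) := by ring
      _ ≤ √ε * δ ^ 2 * (1 / 20) := by gcongr; nlinarith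
      _ ≤ √ε * (δ / 10) * (7 / 10 * δ) := by nlinarith [mul_nonneg hs (sq_nonneg δ)]

lemma green_constants_of_le_pow {d : ℕ} {δ ε : ℝ} (hδ : 0 < δ) (hδd : 40 * (d + 1) * δ ≤ 1)
    (hε : 0 < ε) (hεδ : ε ≤ δ ^ 20) :
    2 * d * ε < 7 / 10 * δ ∧ (7 / 10 * δ - 2 * d * ε)⁻¹ ≤ 10 / δ ∧
      ∀ n : ℕ, n ≠ 0 → (2 * d * ε / (7 / 10 * δ)) ^ n * (7 / 10 * δ - 2 * d * ε)⁻¹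
        ≤ Real.exp (-(|Real.log ε| / 2) * n) := by
  obtain ⟨hsmall, hratio⟩ := hopping_le_of_le_pow hδ hδd hε hεδ
  have hδ1 : δ ≤ 1 := by nlinarith [d.cast_nonneg (α := ℝ)]
  have hinv : (7 / 10 * δ - 2 * d * ε)⁻¹ ≤ 10 / δ := by
    rw [inv_le_comm₀ (by linarith) (by positivity), inv_div]; linarith
  refine ⟨by linarith, hinv, fun n hn => ?_⟩
  rw [← sqrt_pow_eq_exp_neg_abs_log hε (hεδ.trans (pow_le_one₀ hδ.le hδ1)) n]
  calc (2 * d * ε / (7 / 10 * δ)) ^ n * (7 / 10 * δ - 2 * d * ε)⁻¹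
      ≤ (√ε * (δ / 10)) ^ n * (10 / δ) :=
        mul_le_mul (pow_le_pow_left₀ (by positivity) hratio n) hinv
          (inv_nonneg.2 (by linarith)) (by positivity)
    _ = √ε ^ n * ((δ / 10) ^ n * (10 / δ)) := by ring
    _ ≤ √ε ^ n * ((δ / 10) * (10 / δ)) := by
        gcongr; exact pow_le_of_le_one (by positivity) (by linarith) hn
    _ = √ε ^ n := by field_simp

/-- Green's function estimates at step 0: there is `ε₀* > 0` depending only on
`v` and `d` such that for `0 < ε₀ ≤ ε₀*`, `0 < ε ≤ ε₀`, any finite `Λ ⊂ ℤ^d` with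
`Λ ∩ Q₀ = ∅`, any `θ` with `|θ − θ*| < δ₀/(10M₁)` and `E` with `|E − E*| < δ₀/5`,
the matrix `H_Λ(θ) − E` is invertible, `‖G_Λ(θ;E)‖ ≤ 10δ₀⁻¹`, and
`|G_Λ(θ;E)(x,y)| ≤ e^{−γ₀‖x−y‖₁}` for `x ≠ y`, where `γ₀ = |log ε|/2`. -/
theorem statement3 (v : ℝ → ℝ) (a : ℝ) (hv : CosLike v a) (d : ℕ) :
    ∃ ε₀star > (0 : ℝ), ∀ ε₀ ε : ℝ, 0 < ε₀ → ε₀ ≤ ε₀star → 0 < ε → ε ≤ ε₀ →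
      ∀ ω : Fin d → ℝ, (∀ i, ω i ∈ Set.Icc (0 : ℝ) 1) →
      ∀ (θs Es : ℝ) (Λ : Finset (Fin d → ℤ)),
        (∀ x ∈ Λ, ¬ |v (θs + dotw x ω) - Es| < delta0 ε₀) →
        ∀ θ E : ℝ, |θ - θs| < delta0 ε₀ / (10 * M1 v) → |E - Es| < delta0 ε₀ / 5 →
          IsUnit (Hmat ε v ω θ Λ - E • 1) ∧
          ‖(Matrix.toEuclideanCLM (𝕜 := ℝ) ((Hmat ε v ω θ Λ - E • 1)⁻¹) :
            EuclideanSpace ℝ Λ →L[ℝ] EuclideanSpace ℝ Λ)‖ ≤ 10 / delta0 ε₀ ∧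
          ∀ x y : Λ, x ≠ y →
            |((Hmat ε v ω θ Λ - E • 1)⁻¹) x y|
              ≤ Real.exp (-(|Real.log ε| / 2) * (nrm1 (x.1 - y.1) : ℝ)) := by
  have hK : (0 : ℝ) < 40 * (d + 1) := by positivity
  refine ⟨(40 * (d + 1 : ℝ))⁻¹ ^ 20, by positivity, ?_⟩
  intro ε₀ ε hε₀ hε₀star hε hεε₀ ω _ θs Es Λ hQ θ E hθ hE
  have hδ : 0 < delta0 ε₀ := delta0_pos hε₀
  have hδd : 40 * (d + 1) * delta0 ε₀ ≤ 1 := by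
    have := delta0_le_of_le_pow hε₀.le (by positivity) hε₀star
    rwa [← mul_one (40 * ((d : ℝ) + 1))⁻¹, le_inv_mul_iff₀ hK] at this
  have hεδ : ε ≤ delta0 ε₀ ^ 20 := by rwa [delta0_pow hε₀.le]
  obtain ⟨hlt, hinv, hpow⟩ := green_constants_of_le_pow hδ hδd hε hεδ
  obtain ⟨hunit, hnorm, hdecay⟩ := Hmat_sub_smul_one_inv_bounds (θ := θ) (E := E) hε.le
    (fun x : Λ => hv.le_abs_sub_of_abs_sub_lt (not_lt.mp (hQ x x.2)) hθ hE) hlt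
  refine ⟨hunit, hnorm.trans hinv, fun x y hxy => (hdecay x y).trans ?_⟩
  have hpos : 0 < nrm1 (x.1 - y.1) := (nrm1_nonneg _).lt_of_ne' fun h =>
    hxy (Subtype.ext (sub_eq_zero.mp (nrm1_eq_zero_iff.mp h)))
  have hcast : ((nrm1 (x.1 - y.1)).toNat : ℝ) = nrm1 (x.1 - y.1) := by
    exact_mod_cast Int.toNat_of_nonneg hpos.le
  simpa only [hcast] using hpow (nrm1 (x.1 - y.1)).toNat (by omega)
end

section
/- (Trial wave function lemma.) Let H be a self-adjoint operator on a finite-dimensional complex inner product space, E* ∈ ℝ, δ ≥ 0, and let ψ₁, …, ψ_m be orthonormal vectors such that ‖(H − E*)ψ_k‖ ≤ δ for all 1 ≤ k ≤ m. Then there exist orthonormal vectors φ₁, …, φ_m and real numbers E₁, …, E_m with Hφ_k = E_k φ_k for all k and Σ_{k=1}^{m} (E_k − E*)² ≤ m δ². -/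
open scoped InnerProductSpace

open Finset in
private lemma aux_select {n m : ℕ} (hmn : m ≤ n) (c p : Fin n → ℝ) (hc : ∀ i, 0 ≤ c i)
    (hp0 : ∀ i, 0 ≤ p i) (hp1 : ∀ i, p i ≤ 1) (hps : ∑ i, p i = m) :
    ∃ f : Fin m → Fin n, Function.Injective f ∧ ∑ k, c (f k) ≤ ∑ i, c i * p i := by
  rcases Nat.eq_zero_or_pos m with hm | hm
  · subst hm
    exact ⟨Fin.elim0, fun k => k.elim0, by
      simp only [Finset.univ_eq_empty, Finset.sum_empty]
      exact Finset.sum_nonneg fun i _ => mul_nonneg (hc i) (hp0 i)⟩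
  set σ := Tuple.sort c with hσ
  set d : Fin n → ℝ := c ∘ σ with hd
  set q : Fin n → ℝ := p ∘ σ with hq
  have hmono : Monotone d := Tuple.monotone_sort c
  refine ⟨fun k => σ (Fin.castLE hmn k),
    σ.injective.comp (Fin.castLE_injective hmn), ?_⟩
  have hrhs : ∑ i, c i * p i = ∑ i, d i * q i := (Equiv.sum_comp σ fun i => c i * p i).symm
  have hqs : ∑ i, q i = m := by rw [hq]; rw [← hps]; exact Equiv.sum_comp σ p
  have hq0 : ∀ i, 0 ≤ q i := fun i => hp0 _
  have hq1 : ∀ i, q i ≤ 1 := fun i => hp1 _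
  rw [hrhs]
  show ∑ k : Fin m, d (Fin.castLE hmn k) ≤ ∑ i, d i * q i
  -- the set of the first m indices
  set S : Finset (Fin n) := Finset.univ.map (Fin.castLEEmb hmn) with hS
  have hmem : ∀ i : Fin n, i ∈ S ↔ (i : ℕ) < m := by
    intro i
    simp only [hS, Finset.mem_map, Finset.mem_univ, true_and, Fin.castLEEmb]
    constructor
    · rintro ⟨a, rfl⟩; exact a.2
    · rintro hi; exact ⟨⟨i, hi⟩, rfl⟩
  have hsum_S : ∑ i ∈ S, d i = ∑ k : Fin m, d (Fin.castLE hmn k) := by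
    rw [hS, Finset.sum_map]; rfl
  set t : ℝ := d ⟨m - 1, by omega⟩ with ht
  have hS_le : ∀ i ∈ S, d i ≤ t := by
    intro i hi
    exact hmono (by rw [Fin.le_def]; have := (hmem i).1 hi; simp; omega)
  have hSc_ge : ∀ i ∈ Sᶜ, t ≤ d i := by
    intro i hi
    have : ¬ (i : ℕ) < m := by
      intro h; exact (Finset.mem_compl.1 hi) ((hmem i).2 h)
    exact hmono (by rw [Fin.le_def]; simp; omega)
  have hsplit : ∑ i, d i * q i = ∑ i ∈ S, d i * q i + ∑ i ∈ Sᶜ, d i * q i :=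
    (Finset.sum_add_sum_compl S _).symm
  have hqsplit : ∑ i ∈ S, q i + ∑ i ∈ Sᶜ, q i = (m : ℝ) := by
    rw [Finset.sum_add_sum_compl S q]; exact hqs
  calc ∑ k : Fin m, d (Fin.castLE hmn k) = ∑ i ∈ S, d i := hsum_S.symm
    _ = ∑ i ∈ S, (d i * q i + d i * (1 - q i)) := by
        apply Finset.sum_congr rfl; intros; ring
    _ = ∑ i ∈ S, d i * q i + ∑ i ∈ S, d i * (1 - q i) := Finset.sum_add_distrib
    _ ≤ ∑ i ∈ S, d i * q i + ∑ i ∈ S, t * (1 - q i) := by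
        have h := Finset.sum_le_sum (fun i hi =>
          mul_le_mul_of_nonneg_right (hS_le i hi) (by linarith [hq1 i] :
            (0:ℝ) ≤ 1 - q i))
        linarith
    _ = ∑ i ∈ S, d i * q i + t * (∑ i ∈ Sᶜ, q i) := by
        congr 1
        rw [← Finset.mul_sum]
        congr 1
        have hcard : (S.card : ℝ) = m := by rw [hS]; simp
        have : ∑ i ∈ S, (1 - q i) = (S.card : ℝ) - ∑ i ∈ S, q i := by
          rw [Finset.sum_sub_distrib, Finset.sum_const, nsmul_eq_mul, mul_one]
        rw [this, hcard]; linarith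
    _ = ∑ i ∈ S, d i * q i + ∑ i ∈ Sᶜ, t * q i := by rw [Finset.mul_sum]
    _ ≤ ∑ i ∈ S, d i * q i + ∑ i ∈ Sᶜ, d i * q i := by
        have h := Finset.sum_le_sum (fun i hi =>
          mul_le_mul_of_nonneg_right (hSc_ge i hi) (hq0 i))
        linarith
    _ = ∑ i, d i * q i := hsplit.symm


open scoped InnerProductSpace

/-- Trial wave function lemma: if `H` is self-adjoint on a finite-dimensional
complex inner product space and `ψ₁, …, ψ_m` are orthonormal with `‖(H − E*)ψ_k‖ ≤ δ` for all
`k`, then there are orthonormal eigenvectors `φ₁, …, φ_m` with real eigenvalues `E₁, …, E_m`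
satisfying `Σ_k (E_k − E*)² ≤ m δ²`. -/
theorem statement13 {V : Type*} [NormedAddCommGroup V] [InnerProductSpace ℂ V]
    [FiniteDimensional ℂ V]
    (H : V →ₗ[ℂ] V) (hH : LinearMap.IsSymmetric H)
    (Es δ : ℝ) (hδ : 0 ≤ δ) (m : ℕ) (ψ : Fin m → V)
    (hortho : Orthonormal ℂ ψ)
    (htrial : ∀ k, ‖H (ψ k) - (Es : ℂ) • ψ k‖ ≤ δ) :
    ∃ (φ : Fin m → V) (E : Fin m → ℝ), Orthonormal ℂ φ ∧
      (∀ k, H (φ k) = (E k : ℂ) • φ k) ∧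
      ∑ k, (E k - Es) ^ 2 ≤ (m : ℝ) * δ ^ 2 := by
  classical
  set n := Module.finrank ℂ V with hn
  set b : OrthonormalBasis (Fin n) ℂ V := hH.eigenvectorBasis rfl with hb
  set μ : Fin n → ℝ := hH.eigenvalues rfl with hμ
  have hbeig : ∀ i, H (b i) = (μ i : ℂ) • b i := fun i => hH.apply_eigenvectorBasis rfl i
  have hmn : m ≤ n := by
    have := hortho.linearIndependent.fintype_card_le_finrank
    simpa using this
  set c : Fin n → ℝ := fun i => (μ i - Es) ^ 2 with hc
  set p : Fin n → ℝ := fun i => ∑ k, ‖⟪b i, ψ k⟫_ℂ‖ ^ 2 with hp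
  -- Parseval
  have hpars : ∀ x : V, ‖x‖ ^ 2 = ∑ i, ‖⟪b i, x⟫_ℂ‖ ^ 2 := by
    intro x
    rw [← b.repr.norm_map x, EuclideanSpace.norm_eq,
      Real.sq_sqrt (Finset.sum_nonneg fun i _ => sq_nonneg _)]
    simp_rw [b.repr_apply_apply]
  -- inner products with the eigenbasis
  have hinner : ∀ i k, ⟪b i, H (ψ k) - (Es : ℂ) • ψ k⟫_ℂ
      = ((μ i : ℂ) - Es) * ⟪b i, ψ k⟫_ℂ := by
    intro i k
    rw [inner_sub_right, inner_smul_right]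
    have h1 : ⟪b i, H (ψ k)⟫_ℂ = (μ i : ℂ) * ⟪b i, ψ k⟫_ℂ := by
      rw [← hH (b i) (ψ k), hbeig i, inner_smul_left, Complex.conj_ofReal]
    rw [h1]; ring
  -- Fact A
  have hA : ∑ i, c i * p i ≤ (m : ℝ) * δ ^ 2 := by
    have key : ∀ k, ∑ i, c i * ‖⟪b i, ψ k⟫_ℂ‖ ^ 2 = ‖H (ψ k) - (Es : ℂ) • ψ k‖ ^ 2 := by
      intro k
      rw [hpars]
      apply Finset.sum_congr rfl
      intro i _
      rw [hinner i k, norm_mul, mul_pow, hc]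
      congr 2
      rw [show ((μ i : ℂ) - Es) = ((μ i - Es : ℝ) : ℂ) by push_cast; ring,
        Complex.norm_real, Real.norm_eq_abs, sq_abs]
    calc ∑ i, c i * p i = ∑ i, ∑ k, c i * ‖⟪b i, ψ k⟫_ℂ‖ ^ 2 := by
          simp_rw [hp, Finset.mul_sum]
      _ = ∑ k, ∑ i, c i * ‖⟪b i, ψ k⟫_ℂ‖ ^ 2 := Finset.sum_comm
      _ = ∑ k, ‖H (ψ k) - (Es : ℂ) • ψ k‖ ^ 2 := Finset.sum_congr rfl fun k _ => key k
      _ ≤ ∑ k : Fin m, δ ^ 2 := Finset.sum_le_sum fun k _ =>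
          pow_le_pow_left₀ (norm_nonneg _) (htrial k) 2
      _ = (m : ℝ) * δ ^ 2 := by simp [mul_comm]
  -- Fact B
  have hB : ∀ i, p i ≤ 1 := by
    intro i
    have h1 : p i = ∑ k, ‖⟪ψ k, b i⟫_ℂ‖ ^ 2 := by
      apply Finset.sum_congr rfl
      intro k _
      rw [norm_inner_symm]
    rw [h1]
    have := hortho.sum_inner_products_le (b i) (s := Finset.univ)
    simpa [b.orthonormal.1 i] using this
  -- Fact C
  have hC : ∑ i, p i = m := by
    rw [hp, Finset.sum_comm]
    have : ∀ k : Fin m, ∑ i, ‖⟪b i, ψ k⟫_ℂ‖ ^ 2 = 1 := by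
      intro k
      rw [← hpars, hortho.1 k, one_pow]
    rw [Finset.sum_congr rfl fun k _ => this k]
    simp
  obtain ⟨f, hfinj, hf⟩ := aux_select hmn c p (fun i => sq_nonneg _)
    (fun i => Finset.sum_nonneg fun k _ => sq_nonneg _) hB hC
  exact ⟨fun k => b (f k), fun k => μ (f k), b.orthonormal.comp f hfinj,
    fun k => hbeig (f k), le_trans hf hA⟩
end

section
/- Let H be a self-adjoint operator on a nonzero finite-dimensional complex inner product space, E* ∈ ℝ and δ ≥ 0. (i) If ψ is a unit vector with ‖(H − E*)ψ‖ ≤ δ, then H has an eigenvalue E with |E − E*| ≤ δ. (ii) If ψ₁, ψ₂ are orthonormal vectors with ‖(H − E*)ψ₁‖ ≤ δ and ‖(H − E*)ψ₂‖ ≤ δ, then there exist orthonormal vectors φ₁, φ₂ and real numbers E₁, E₂ with Hφ_k = E_k φ_k and |E_k − E*| ≤ √2·δ for k = 1, 2. -/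
/-!
Expand a vector in an orthonormal eigenbasis `bᵢ` of `T` (eigenvalues `μᵢ`):
`‖(T - c)ψ‖² = ∑ᵢ (μᵢ - c)² ‖⟪bᵢ, ψ⟫‖²`. By a strict Chebyshev bound, if `m δ² ≤ t²` then a unit
vector with `‖(T - c)ψ‖ ≤ δ` has weight `< 1/m` on the eigenvectors with `|μᵢ - c| > t`. For `m`
orthonormal such vectors the total weight on the eigenvectors with `|μᵢ - c| ≤ t` therefore
exceeds `m - 1`, while by Bessel's inequality each eigenvector carries total weight at most `1`;
so there are at least `m` of them. Parts (i) and (ii) are the cases `m = 1` and `m = 2`.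
-/

open scoped InnerProductSpace
open Finset

theorem Finset.sum_filter_lt_abs_eq_zero_or_sq_mul_lt {ι : Type*} (s : Finset ι) {w d : ι → ℝ}
    (hw : ∀ i ∈ s, 0 ≤ w i) {t : ℝ} (ht : 0 ≤ t) :
    ∑ i ∈ s with t < |d i|, w i = 0 ∨
      t ^ 2 * ∑ i ∈ s with t < |d i|, w i < ∑ i ∈ s, d i ^ 2 * w i := by
  by_cases hzero : ∀ i ∈ s.filter (t < |d ·|), w i = 0
  · exact .inl (sum_eq_zero hzero)
  push Not at hzero
  obtain ⟨i₀, hi₀, hwi₀⟩ := hzero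
  have hsq : ∀ i ∈ s.filter (t < |d ·|), t ^ 2 < d i ^ 2 := fun i hi ↦ by
    simpa only [sq_abs] using pow_lt_pow_left₀ (mem_filter.mp hi).2 ht two_ne_zero
  refine .inr ?_
  calc t ^ 2 * ∑ i ∈ s with t < |d i|, w i
      = ∑ i ∈ s with t < |d i|, t ^ 2 * w i := mul_sum _ _ _
    _ < ∑ i ∈ s with t < |d i|, d i ^ 2 * w i := by
        refine sum_lt_sum (fun i hi ↦ ?_) ⟨i₀, hi₀, ?_⟩
        · exact mul_le_mul_of_nonneg_right (hsq i hi).le (hw i (mem_filter.mp hi).1)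
        · exact mul_lt_mul_of_pos_right (hsq i₀ hi₀)
            (lt_of_le_of_ne (hw i₀ (mem_filter.mp hi₀).1) (Ne.symm hwi₀))
    _ ≤ ∑ i ∈ s, d i ^ 2 * w i :=
        sum_le_sum_of_subset_of_nonneg (filter_subset _ _) fun i hi _ ↦
          mul_nonneg (sq_nonneg _) (hw i hi)

namespace LinearMap.IsSymmetric

variable {𝕜 E ι : Type*} [RCLike 𝕜] [NormedAddCommGroup E] [InnerProductSpace 𝕜 E] [Fintype ι]
  {T : E →ₗ[𝕜] E} {b : OrthonormalBasis ι 𝕜 E} {μ : ι → ℝ}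

theorem norm_apply_sub_smul_sq_eq_sum (hT : T.IsSymmetric) (hb : ∀ i, T (b i) = (μ i : 𝕜) • b i)
    (c : ℝ) (ψ : E) :
    ‖T ψ - (c : 𝕜) • ψ‖ ^ 2 = ∑ i, (μ i - c) ^ 2 * ‖⟪b i, ψ⟫_𝕜‖ ^ 2 := by
  rw [← b.sum_sq_norm_inner_right]
  refine sum_congr rfl fun i _ ↦ ?_
  have hcoeff : ⟪b i, T ψ - (c : 𝕜) • ψ⟫_𝕜 = ((μ i - c : ℝ) : 𝕜) * ⟪b i, ψ⟫_𝕜 := by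
    rw [inner_sub_right, inner_smul_right, ← hT, hb, inner_smul_left, RCLike.conj_ofReal]
    push_cast
    ring
  rw [hcoeff, norm_mul, mul_pow, RCLike.norm_ofReal, sq_abs]

theorem sum_inner_far_eq_zero_or_lt (hT : T.IsSymmetric) (hb : ∀ i, T (b i) = (μ i : 𝕜) • b i)
    {c δ t : ℝ} (ht : 0 ≤ t) {ψ : E} (hψ : ‖T ψ - (c : 𝕜) • ψ‖ ≤ δ) :
    ∑ i with t < |μ i - c|, ‖⟪b i, ψ⟫_𝕜‖ ^ 2 = 0 ∨
      t ^ 2 * ∑ i with t < |μ i - c|, ‖⟪b i, ψ⟫_𝕜‖ ^ 2 < δ ^ 2 := by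
  have hδ : ∑ i, (μ i - c) ^ 2 * ‖⟪b i, ψ⟫_𝕜‖ ^ 2 ≤ δ ^ 2 := by
    rw [← norm_apply_sub_smul_sq_eq_sum hT hb]
    exact pow_le_pow_left₀ (norm_nonneg _) hψ 2
  exact (univ.sum_filter_lt_abs_eq_zero_or_sq_mul_lt (fun i _ ↦ by positivity) ht).imp_right
    (·.trans_le hδ)

theorem card_le_card_filter_abs_sub_le (hT : T.IsSymmetric)
    (hb : ∀ i, T (b i) = (μ i : 𝕜) • b i) {κ : Type*} [Fintype κ] {ψ : κ → E}
    (hψ : Orthonormal 𝕜 ψ) {c δ t : ℝ} (happrox : ∀ k, ‖T (ψ k) - (c : 𝕜) • ψ k‖ ≤ δ)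
    (ht : 0 ≤ t) (hδt : Fintype.card κ * δ ^ 2 ≤ t ^ 2) :
    Fintype.card κ ≤ #{i | |μ i - c| ≤ t} := by
  rcases isEmpty_or_nonempty κ with hκ | hκ
  · simp
  set m : ℝ := (Fintype.card κ : ℝ)
  set near := ∑ k, ∑ i with |μ i - c| ≤ t, ‖⟪b i, ψ k⟫_𝕜‖ ^ 2
  set far := ∑ k, ∑ i with t < |μ i - c|, ‖⟪b i, ψ k⟫_𝕜‖ ^ 2
  have hsplit : near + far = m := by
    simp only [near, far, m, ← sum_add_distrib]
    have hk : ∀ k, ∑ i with |μ i - c| ≤ t, ‖⟪b i, ψ k⟫_𝕜‖ ^ 2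
        + ∑ i with t < |μ i - c|, ‖⟪b i, ψ k⟫_𝕜‖ ^ 2 = 1 := fun k ↦ by
      simp only [← not_le]
      rw [sum_filter_add_sum_filter_not, b.sum_sq_norm_inner_right, hψ.1 k, one_pow]
    simp [hk]
  have hfar : far < 1 := by
    have hk : ∀ k, m * ∑ i with t < |μ i - c|, ‖⟪b i, ψ k⟫_𝕜‖ ^ 2 < 1 := fun k ↦ by
      set W := ∑ i with t < |μ i - c|, ‖⟪b i, ψ k⟫_𝕜‖ ^ 2
      have hW : 0 ≤ W := sum_nonneg fun i _ ↦ by positivity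
      rcases sum_inner_far_eq_zero_or_lt hT hb ht (happrox k) with h | h
      · simp [W, h]
      · by_contra! hmW
        nlinarith [mul_le_mul_of_nonneg_right hδt hW, mul_le_mul_of_nonneg_left hmW (sq_nonneg δ)]
    have hm : m * far < m * 1 := calc
      m * far = ∑ k, m * ∑ i with t < |μ i - c|, ‖⟪b i, ψ k⟫_𝕜‖ ^ 2 := mul_sum _ _ _
      _ < ∑ _k : κ, (1 : ℝ) := sum_lt_sum_of_nonempty univ_nonempty fun k _ ↦ hk k
      _ = m * 1 := by simp [m]
    exact lt_of_mul_lt_mul_left hm (by positivity)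
  have hnear : near ≤ #{i | |μ i - c| ≤ t} := calc
    near = ∑ i with |μ i - c| ≤ t, ∑ k, ‖⟪ψ k, b i⟫_𝕜‖ ^ 2 := by
      simp only [near, norm_inner_symm (b _)]
      exact sum_comm
    _ ≤ ∑ i with |μ i - c| ≤ t, (1 : ℝ) := sum_le_sum fun i _ ↦ by
      simpa [b.orthonormal.1 i] using hψ.sum_inner_products_le (b i) (s := univ)
    _ = #{i | |μ i - c| ≤ t} := by simp
  have hcard : (Fintype.card κ : ℝ) < #{i | |μ i - c| ≤ t} + 1 := by linarith
  exact Nat.lt_succ_iff.mp (by exact_mod_cast hcard)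

theorem exists_orthonormal_eigenvectors_of_approx [FiniteDimensional 𝕜 E] (hT : T.IsSymmetric)
    {κ : Type*} [Fintype κ] {ψ : κ → E} (hψ : Orthonormal 𝕜 ψ) {c δ t : ℝ}
    (happrox : ∀ k, ‖T (ψ k) - (c : 𝕜) • ψ k‖ ≤ δ) (ht : 0 ≤ t)
    (hδt : Fintype.card κ * δ ^ 2 ≤ t ^ 2) :
    ∃ (φ : κ → E) (e : κ → ℝ), Orthonormal 𝕜 φ ∧
      (∀ k, T (φ k) = (e k : 𝕜) • φ k) ∧ ∀ k, |e k - c| ≤ t := by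
  set b := hT.eigenvectorBasis rfl
  set μ := hT.eigenvalues rfl
  have hcard := card_le_card_filter_abs_sub_le hT (hT.apply_eigenvectorBasis rfl) hψ happrox ht hδt
  rw [← Fintype.card_coe] at hcard
  obtain ⟨f⟩ := Function.Embedding.nonempty_of_card_le hcard
  refine ⟨fun k ↦ b (f k), fun k ↦ μ (f k), b.orthonormal.comp _ ?_,
    fun k ↦ hT.apply_eigenvectorBasis rfl _, fun k ↦ (mem_filter.mp (f k).2).2⟩
  exact Subtype.val_injective.comp f.injective

end LinearMap.IsSymmetric

theorem statement14_general {V : Type*} [NormedAddCommGroup V] [InnerProductSpace ℂ V]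
    [FiniteDimensional ℂ V]
    (H : V →ₗ[ℂ] V) (hH : LinearMap.IsSymmetric H)
    (Es δ : ℝ) (hδ : 0 ≤ δ) :
    (∀ ψ : V, ‖ψ‖ = 1 → ‖H ψ - (Es : ℂ) • ψ‖ ≤ δ →
      ∃ (E : ℝ) (φ : V), ‖φ‖ = 1 ∧ H φ = (E : ℂ) • φ ∧ |E - Es| ≤ δ) ∧
    (∀ ψ₁ ψ₂ : V, Orthonormal ℂ ![ψ₁, ψ₂] →
      ‖H ψ₁ - (Es : ℂ) • ψ₁‖ ≤ δ → ‖H ψ₂ - (Es : ℂ) • ψ₂‖ ≤ δ →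
      ∃ (E₁ E₂ : ℝ) (φ₁ φ₂ : V), Orthonormal ℂ ![φ₁, φ₂] ∧
        H φ₁ = (E₁ : ℂ) • φ₁ ∧ H φ₂ = (E₂ : ℂ) • φ₂ ∧
        |E₁ - Es| ≤ Real.sqrt 2 * δ ∧ |E₂ - Es| ≤ Real.sqrt 2 * δ) := by
  constructor
  · intro ψ hψ happrox
    have hψ' : Orthonormal ℂ fun _ : Unit ↦ ψ :=
      ⟨fun _ ↦ hψ, fun i j hij ↦ (hij (Subsingleton.elim i j)).elim⟩
    obtain ⟨φ, e, hφ, heig, hnear⟩ := hH.exists_orthonormal_eigenvectors_of_approx hψ'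
      (fun _ ↦ happrox) hδ (by simp)
    exact ⟨e (), φ (), hφ.1 (), heig (), hnear ()⟩
  · intro ψ₁ ψ₂ hψ happrox₁ happrox₂
    have happrox : ∀ k, ‖H (![ψ₁, ψ₂] k) - (Es : ℂ) • ![ψ₁, ψ₂] k‖ ≤ δ := by
      intro k; fin_cases k <;> assumption
    have hδt : Fintype.card (Fin 2) * δ ^ 2 ≤ (Real.sqrt 2 * δ) ^ 2 := by
      rw [mul_pow, Real.sq_sqrt zero_le_two]; simp
    obtain ⟨φ, e, hφ, heig, hnear⟩ := hH.exists_orthonormal_eigenvectors_of_approx hψ happrox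
      (by positivity) hδt
    have hφ_eq : ![φ 0, φ 1] = φ := by ext k; fin_cases k <;> rfl
    exact ⟨e 0, e 1, φ 0, φ 1, hφ_eq ▸ hφ, heig 0, heig 1, hnear 0, hnear 1⟩

/-- (i) a single unit trial vector with `‖(H − E*)ψ‖ ≤ δ` produces an eigenvalue
within `δ` of `E*`; (ii) two orthonormal trial vectors produce two orthonormal eigenvectors
whose eigenvalues are within `√2·δ` of `E*`. -/
theorem statement14 {V : Type*} [NormedAddCommGroup V] [InnerProductSpace ℂ V]
    [FiniteDimensional ℂ V] [Nontrivial V]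
    (H : V →ₗ[ℂ] V) (hH : LinearMap.IsSymmetric H)
    (Es δ : ℝ) (hδ : 0 ≤ δ) :
    (∀ ψ : V, ‖ψ‖ = 1 → ‖H ψ - (Es : ℂ) • ψ‖ ≤ δ →
      ∃ (E : ℝ) (φ : V), ‖φ‖ = 1 ∧ H φ = (E : ℂ) • φ ∧ |E - Es| ≤ δ) ∧
    (∀ ψ₁ ψ₂ : V, Orthonormal ℂ ![ψ₁, ψ₂] →
      ‖H ψ₁ - (Es : ℂ) • ψ₁‖ ≤ δ → ‖H ψ₂ - (Es : ℂ) • ψ₂‖ ≤ δ →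
      ∃ (E₁ E₂ : ℝ) (φ₁ φ₂ : V), Orthonormal ℂ ![φ₁, φ₂] ∧
        H φ₁ = (E₁ : ℂ) • φ₁ ∧ H φ₂ = (E₂ : ℂ) • φ₂ ∧
        |E₁ - Es| ≤ Real.sqrt 2 * δ ∧ |E₂ - Es| ≤ Real.sqrt 2 * δ) :=
  statement14_general H hH Es δ hδ
end

section
/- (Morse-type lemma.) Let L > 0, θ_s ∈ ℝ, and let E : [θ_s − L, θ_s + L] → ℝ be C² with E(θ_s − t) = E(θ_s + t) for all 0 ≤ t ≤ L. Suppose δ > 0 is such that either E''(θ) ≥ 2 for every θ in the domain with |E'(θ)| ≤ δ, or E''(θ) ≤ −2 for every θ in the domain with |E'(θ)| ≤ δ. Then: (i) for all θ₁, θ₂ in the domain with M := min(|θ₂ − θ₁|, |θ₂ + θ₁ − 2θ_s|) ≤ δ, one has |E(θ₂) − E(θ₁)| ≥ M²/2; (ii) for all θ in the domain, |E'(θ)| ≥ min(δ, |θ − θ_s|). -/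
/-!
By symmetry `E'` is odd about `θs`, so `E' θs = 0`, and with `u = |θ - θs|` both claims reduce
to the right half `[θs, θs + L]`; for (i) this uses `min |p - q| |p + q| = | |p| - |q| |`.
Replacing `E` by `-E` we may assume `E'' ≥ 2` wherever `|E'| ≤ δ`. A fencing argument then gives
`E' (θs + u) ≥ min δ (2 u)`: `E'` could only cross the ramp `2 u` or the level `δ` at a point
where `|E'| ≤ δ`, and there `E'' ≥ 2` pushes it back up. Consequently, for `θs ≤ x ≤ y ≤ x + δ`,
`E' t ≥ t - x` on `[x, y]`, so the parabola `E x + (t - x)² / 2` is a lower barrier for `E`.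
-/

open Set Filter Topology

theorem HasDerivWithinAt.Ici_of_Icc {f : ℝ → ℝ} {f' a b x : ℝ}
    (h : HasDerivWithinAt f f' (Icc a b) x) (hx : x ∈ Ico a b) :
    HasDerivWithinAt f f' (Ici x) x :=
  (h.mono (Icc_subset_Icc_left hx.1)).mono_of_mem_nhdsWithin (Icc_mem_nhdsGE hx.2)

section Barrier

variable {f f' : ℝ → ℝ} {a b δ k : ℝ}

theorem min_le_of_lt_deriv_right_of_abs_le (hδ : 0 ≤ δ) (hk : 0 < k)
    (hf : ContinuousOn f (Icc a b)) (hf' : ∀ x ∈ Ico a b, HasDerivWithinAt f (f' x) (Ici x) x)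
    (ha : 0 ≤ f a) (hslope : ∀ x ∈ Ico a b, |f x| ≤ δ → k < f' x) :
    ∀ x ∈ Icc a b, min δ (k * (x - a)) ≤ f x := by
  -- the ramp `k (t - a)` up to height `δ`, then the constant `δ`, are lower barriers for `f`
  have ramp : ∀ x ∈ Icc a b, k * (x - a) ≤ δ → k * (x - a) ≤ f x := by
    intro x hx hxδ
    refine image_le_of_deriv_right_lt_deriv_boundary' (f := fun t ↦ k * (t - a)) (f' := fun _ ↦ k)
      (by fun_prop) ?_ (by simpa using ha) (hf.mono (Icc_subset_Icc_right hx.2))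
      (fun t ht ↦ hf' t ⟨ht.1, ht.2.trans_le hx.2⟩) ?_ ⟨hx.1, le_rfl⟩
    · intro t _
      simpa using (((hasDerivAt_id t).sub_const a).const_mul k).hasDerivWithinAt
    · intro t ht hft
      refine hslope t ⟨ht.1, ht.2.trans_le hx.2⟩ ?_
      rw [← hft, abs_le]
      constructor <;> nlinarith [ht.1, ht.2]
  intro x hx
  by_cases hxδ : k * (x - a) ≤ δ
  · exact (min_le_right _ _).trans (ramp x hx hxδ)
  set c := a + δ / k with hc
  have hkc : k * (c - a) = δ := by rw [hc, add_sub_cancel_left, mul_div_cancel₀ _ hk.ne']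
  have hcx : c ≤ x := by nlinarith
  have hac : a ≤ c := le_add_of_nonneg_right (div_nonneg hδ hk.le)
  have hfc : δ ≤ f c := hkc ▸ ramp c ⟨hac, hcx.trans hx.2⟩ hkc.le
  refine (min_le_left _ _).trans ?_
  refine image_le_of_deriv_right_lt_deriv_boundary' (f := fun _ ↦ δ) (f' := fun _ ↦ 0)
    continuousOn_const (fun t _ ↦ hasDerivWithinAt_const t _ δ) hfc
    (hf.mono (Icc_subset_Icc hac hx.2))
    (fun t ht ↦ hf' t ⟨hac.trans ht.1, ht.2.trans_le hx.2⟩) ?_ ⟨hcx, le_rfl⟩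
  intro t ht hft
  exact hk.trans (hslope t ⟨hac.trans ht.1, ht.2.trans_le hx.2⟩ (by rw [← hft, abs_of_nonneg hδ]))

theorem min_le_of_le_deriv_right_of_abs_le (hδ : 0 ≤ δ) (hk : 0 < k)
    (hf : ContinuousOn f (Icc a b)) (hf' : ∀ x ∈ Ico a b, HasDerivWithinAt f (f' x) (Ici x) x)
    (ha : 0 ≤ f a) (hslope : ∀ x ∈ Ico a b, |f x| ≤ δ → k ≤ f' x) :
    ∀ x ∈ Icc a b, min δ (k * (x - a)) ≤ f x := by
  intro x hx
  have hlim : Tendsto (fun k' ↦ min δ (k' * (x - a))) (𝓝[<] k) (𝓝 (min δ (k * (x - a)))) :=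
    ((continuous_const.min (continuous_id.mul continuous_const)).tendsto k).mono_left
      nhdsWithin_le_nhds
  refine le_of_tendsto hlim (eventually_of_mem (Ioo_mem_nhdsLT hk) fun k' hk' ↦ ?_)
  exact min_le_of_lt_deriv_right_of_abs_le hδ hk'.1 hf hf' ha
    (fun t ht hft ↦ hk'.2.trans_le (hslope t ht hft)) x hx

end Barrier

theorem min_abs_sub_abs_add (p q : ℝ) : min |p - q| |p + q| = |(|p| - |q|)| := by
  rcases le_total 0 p with hp | hp <;> rcases le_total 0 q with hq | hq <;>
  simp only [abs_of_nonneg, abs_of_nonpos, hp, hq] <;> grind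

section Symmetric

variable {f f' : ℝ → ℝ} {c L x : ℝ}

theorem apply_two_mul_sub_eq (hsym : ∀ t ∈ Icc (0 : ℝ) L, f (c - t) = f (c + t))
    (hx : x ∈ Icc (c - L) (c + L)) : f (2 * c - x) = f x := by
  rcases le_total c x with h | h
  · convert hsym (x - c) ⟨by linarith, by linarith [hx.2]⟩ using 2 <;> ring
  · convert (hsym (c - x) ⟨by linarith, by linarith [hx.1]⟩).symm using 2 <;> ring

theorem apply_eq_apply_add_abs_sub (hsym : ∀ t ∈ Icc (0 : ℝ) L, f (c - t) = f (c + t))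
    (hx : x ∈ Icc (c - L) (c + L)) : f x = f (c + |x - c|) := by
  rcases le_total c x with h | h
  · rw [abs_of_nonneg (sub_nonneg.2 h), add_sub_cancel]
  · rw [abs_of_nonpos (sub_nonpos.2 h), ← apply_two_mul_sub_eq hsym hx]
    ring_nf

theorem deriv_two_mul_sub_eq_neg (hL : 0 < L)
    (hf : ∀ x ∈ Icc (c - L) (c + L), HasDerivWithinAt f (f' x) (Icc (c - L) (c + L)) x)
    (hsym : ∀ t ∈ Icc (0 : ℝ) L, f (c - t) = f (c + t)) (hx : x ∈ Icc (c - L) (c + L)) :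
    f' (2 * c - x) = -f' x := by
  have hreflect : MapsTo (fun u ↦ 2 * c - u) (Icc (c - L) (c + L)) (Icc (c - L) (c + L)) :=
    fun u hu ↦ ⟨by linarith [hu.2], by linarith [hu.1]⟩
  have hcomp : HasDerivWithinAt f (f' (2 * c - x) * (-1)) (Icc (c - L) (c + L)) x := by
    refine ((hf _ (hreflect hx)).comp x ((hasDerivAt_id x).const_sub (2 * c)).hasDerivWithinAt
      hreflect).congr (fun y hy ↦ (apply_two_mul_sub_eq hsym hy).symm)
      (apply_two_mul_sub_eq hsym hx).symm
  have := (uniqueDiffOn_Icc (by linarith) x hx).eq_deriv _ hcomp (hf x hx)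
  linarith

theorem abs_deriv_eq_abs_deriv_add_abs_sub (hL : 0 < L)
    (hf : ∀ x ∈ Icc (c - L) (c + L), HasDerivWithinAt f (f' x) (Icc (c - L) (c + L)) x)
    (hsym : ∀ t ∈ Icc (0 : ℝ) L, f (c - t) = f (c + t)) (hx : x ∈ Icc (c - L) (c + L)) :
    |f' x| = |f' (c + |x - c|)| := by
  rcases le_total c x with h | h
  · rw [abs_of_nonneg (sub_nonneg.2 h), add_sub_cancel]
  · rw [abs_of_nonpos (sub_nonpos.2 h), show c + -(x - c) = 2 * c - x by ring,
      deriv_two_mul_sub_eq_neg hL hf hsym hx, abs_neg]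

theorem deriv_center_eq_zero (hL : 0 < L)
    (hf : ∀ x ∈ Icc (c - L) (c + L), HasDerivWithinAt f (f' x) (Icc (c - L) (c + L)) x)
    (hsym : ∀ t ∈ Icc (0 : ℝ) L, f (c - t) = f (c + t)) : f' c = 0 := by
  have := deriv_two_mul_sub_eq_neg hL hf hsym (x := c) ⟨by linarith, by linarith⟩
  rw [two_mul, add_sub_cancel_right] at this
  linarith

end Symmetric

section ConvexCase

variable {L θs δ : ℝ} {E E' E'' : ℝ → ℝ}

theorem min_le_deriv_of_two_le_deriv2 (hL : 0 < L) (hδ : 0 ≤ δ)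
    (hE' : ∀ θ ∈ Icc (θs - L) (θs + L), HasDerivWithinAt E (E' θ) (Icc (θs - L) (θs + L)) θ)
    (hE'' : ∀ θ ∈ Icc (θs - L) (θs + L), HasDerivWithinAt E' (E'' θ) (Icc (θs - L) (θs + L)) θ)
    (hsym : ∀ t ∈ Icc (0 : ℝ) L, E (θs - t) = E (θs + t))
    (hconv : ∀ θ ∈ Icc (θs - L) (θs + L), |E' θ| ≤ δ → 2 ≤ E'' θ) :
    ∀ θ ∈ Icc θs (θs + L), min δ (2 * (θ - θs)) ≤ E' θ := by
  have hsub : Icc θs (θs + L) ⊆ Icc (θs - L) (θs + L) := Icc_subset_Icc_left (by linarith)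
  exact min_le_of_le_deriv_right_of_abs_le hδ two_pos
    (fun θ hθ ↦ (hE'' θ (hsub hθ)).continuousWithinAt.mono hsub)
    (fun θ hθ ↦ (hE'' θ (hsub (Ico_subset_Icc_self hθ))).Ici_of_Icc ⟨by linarith [hθ.1], hθ.2⟩)
    (deriv_center_eq_zero hL hE' hsym).ge
    (fun θ hθ ↦ hconv θ (hsub (Ico_subset_Icc_self hθ)))

theorem sq_div_two_le_sub_of_two_le_deriv2 (hL : 0 < L) (hδ : 0 ≤ δ)
    (hE' : ∀ θ ∈ Icc (θs - L) (θs + L), HasDerivWithinAt E (E' θ) (Icc (θs - L) (θs + L)) θ)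
    (hE'' : ∀ θ ∈ Icc (θs - L) (θs + L), HasDerivWithinAt E' (E'' θ) (Icc (θs - L) (θs + L)) θ)
    (hsym : ∀ t ∈ Icc (0 : ℝ) L, E (θs - t) = E (θs + t))
    (hconv : ∀ θ ∈ Icc (θs - L) (θs + L), |E' θ| ≤ δ → 2 ≤ E'' θ)
    ⦃u v : ℝ⦄ (hu : 0 ≤ u) (huv : u ≤ v) (hv : v ≤ L) (hvu : v - u ≤ δ) :
    (v - u) ^ 2 / 2 ≤ E (θs + v) - E (θs + u) := by
  have hderiv := min_le_deriv_of_two_le_deriv2 hL hδ hE' hE'' hsym hconv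
  have hsub : Icc (θs + u) (θs + v) ⊆ Icc (θs - L) (θs + L) :=
    Icc_subset_Icc (by linarith) (by linarith)
  have := image_le_of_deriv_right_le_deriv_boundary
    (f := fun t ↦ E (θs + u) + (t - (θs + u)) ^ 2 / 2) (f' := fun t ↦ t - (θs + u))
    (by fun_prop) (fun t _ ↦ ?_) (by simp)
    (fun t ht ↦ (hE' t (hsub ht)).continuousWithinAt.mono hsub)
    (fun t ht ↦ (hE' t (hsub (Ico_subset_Icc_self ht))).Ici_of_Icc
      ⟨by linarith [ht.1], by linarith [ht.2]⟩)
    (fun t ht ↦ ?_) (b := θs + v) ⟨by linarith, le_rfl⟩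
  · rw [add_sub_add_left_eq_sub] at this
    linarith
  · exact ((((hasDerivAt_id' t).sub_const (θs + u)).pow 2 |>.div_const 2
      |>.const_add (E (θs + u))).congr_deriv (by norm_num)).hasDerivWithinAt
  · exact (le_min (by linarith [ht.2]) (by linarith [ht.1])).trans
      (hderiv t ⟨by linarith [ht.1], by linarith [ht.2]⟩)

theorem sq_div_two_le_abs_sub_of_two_le_deriv2 (hL : 0 < L) (hδ : 0 ≤ δ)
    (hE' : ∀ θ ∈ Icc (θs - L) (θs + L), HasDerivWithinAt E (E' θ) (Icc (θs - L) (θs + L)) θ)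
    (hE'' : ∀ θ ∈ Icc (θs - L) (θs + L), HasDerivWithinAt E' (E'' θ) (Icc (θs - L) (θs + L)) θ)
    (hsym : ∀ t ∈ Icc (0 : ℝ) L, E (θs - t) = E (θs + t))
    (hconv : ∀ θ ∈ Icc (θs - L) (θs + L), |E' θ| ≤ δ → 2 ≤ E'' θ)
    {θ₁ θ₂ : ℝ} (hθ₁ : θ₁ ∈ Icc (θs - L) (θs + L)) (hθ₂ : θ₂ ∈ Icc (θs - L) (θs + L))
    (hM : min |θ₂ - θ₁| |θ₂ + θ₁ - 2 * θs| ≤ δ) :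
    (min |θ₂ - θ₁| |θ₂ + θ₁ - 2 * θs|) ^ 2 / 2 ≤ |E θ₂ - E θ₁| := by
  have hmin : min |θ₂ - θ₁| |θ₂ + θ₁ - 2 * θs| = |(|θ₂ - θs| - |θ₁ - θs|)| := by
    rw [← min_abs_sub_abs_add]
    ring_nf
  have hdist : ∀ θ ∈ Icc (θs - L) (θs + L), |θ - θs| ≤ L := fun θ hθ ↦
    abs_sub_le_iff.2 ⟨by linarith [hθ.2], by linarith [hθ.1]⟩
  rw [hmin] at hM ⊢
  rw [apply_eq_apply_add_abs_sub hsym hθ₁, apply_eq_apply_add_abs_sub hsym hθ₂]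
  have key := sq_div_two_le_sub_of_two_le_deriv2 hL hδ hE' hE'' hsym hconv
  rcases le_total |θ₁ - θs| |θ₂ - θs| with h | h
  · rw [abs_of_nonneg (sub_nonneg.2 h)] at hM ⊢
    exact (key (abs_nonneg _) h (hdist θ₂ hθ₂) hM).trans (le_abs_self _)
  · rw [abs_sub_comm |θ₂ - θs|, abs_of_nonneg (sub_nonneg.2 h)] at hM ⊢
    rw [abs_sub_comm (E _)]
    exact (key (abs_nonneg _) h (hdist θ₁ hθ₁) hM).trans (le_abs_self _)

theorem min_le_abs_deriv_of_two_le_deriv2 (hL : 0 < L) (hδ : 0 ≤ δ)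
    (hE' : ∀ θ ∈ Icc (θs - L) (θs + L), HasDerivWithinAt E (E' θ) (Icc (θs - L) (θs + L)) θ)
    (hE'' : ∀ θ ∈ Icc (θs - L) (θs + L), HasDerivWithinAt E' (E'' θ) (Icc (θs - L) (θs + L)) θ)
    (hsym : ∀ t ∈ Icc (0 : ℝ) L, E (θs - t) = E (θs + t))
    (hconv : ∀ θ ∈ Icc (θs - L) (θs + L), |E' θ| ≤ δ → 2 ≤ E'' θ)
    {θ : ℝ} (hθ : θ ∈ Icc (θs - L) (θs + L)) :
    min δ |θ - θs| ≤ |E' θ| := by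
  have hdist : |θ - θs| ≤ L := abs_sub_le_iff.2 ⟨by linarith [hθ.2], by linarith [hθ.1]⟩
  rw [abs_deriv_eq_abs_deriv_add_abs_sub hL hE' hsym hθ]
  calc min δ |θ - θs| ≤ min δ (2 * (θs + |θ - θs| - θs)) :=
        min_le_min_left _ (by linarith [abs_nonneg (θ - θs)])
    _ ≤ E' (θs + |θ - θs|) :=
        min_le_deriv_of_two_le_deriv2 hL hδ hE' hE'' hsym hconv _
          ⟨by linarith [abs_nonneg (θ - θs)], by linarith⟩
    _ ≤ |E' (θs + |θ - θs|)| := le_abs_self _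

end ConvexCase

theorem statement15_general (L θs δ : ℝ) (hL : 0 < L) (hδ : 0 < δ)
    (E E' E'' : ℝ → ℝ)
    (hE' : ∀ θ ∈ Set.Icc (θs - L) (θs + L),
      HasDerivWithinAt E (E' θ) (Set.Icc (θs - L) (θs + L)) θ)
    (hE'' : ∀ θ ∈ Set.Icc (θs - L) (θs + L),
      HasDerivWithinAt E' (E'' θ) (Set.Icc (θs - L) (θs + L)) θ)
    (hsym : ∀ t ∈ Set.Icc (0 : ℝ) L, E (θs - t) = E (θs + t))
    (hconv : (∀ θ ∈ Set.Icc (θs - L) (θs + L), |E' θ| ≤ δ → 2 ≤ E'' θ) ∨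
             (∀ θ ∈ Set.Icc (θs - L) (θs + L), |E' θ| ≤ δ → E'' θ ≤ -2)) :
    (∀ θ₁ ∈ Set.Icc (θs - L) (θs + L), ∀ θ₂ ∈ Set.Icc (θs - L) (θs + L),
      min |θ₂ - θ₁| |θ₂ + θ₁ - 2 * θs| ≤ δ →
      (min |θ₂ - θ₁| |θ₂ + θ₁ - 2 * θs|) ^ 2 / 2 ≤ |E θ₂ - E θ₁|) ∧
    (∀ θ ∈ Set.Icc (θs - L) (θs + L), min δ |θ - θs| ≤ |E' θ|) := by
  rcases hconv with hconv | hconc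
  · exact ⟨fun θ₁ hθ₁ θ₂ hθ₂ ↦ sq_div_two_le_abs_sub_of_two_le_deriv2 hL hδ.le hE' hE'' hsym
      hconv hθ₁ hθ₂, fun θ ↦ min_le_abs_deriv_of_two_le_deriv2 hL hδ.le hE' hE'' hsym hconv⟩
  have hnE' : ∀ θ ∈ Icc (θs - L) (θs + L),
      HasDerivWithinAt (-E) (-E' θ) (Icc (θs - L) (θs + L)) θ := fun θ hθ ↦ (hE' θ hθ).neg
  have hnE'' : ∀ θ ∈ Icc (θs - L) (θs + L),
      HasDerivWithinAt (-E') (-E'' θ) (Icc (θs - L) (θs + L)) θ := fun θ hθ ↦ (hE'' θ hθ).neg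
  have hnsym : ∀ t ∈ Icc (0 : ℝ) L, (-E) (θs - t) = (-E) (θs + t) :=
    fun t ht ↦ congrArg Neg.neg (hsym t ht)
  have hnconv : ∀ θ ∈ Icc (θs - L) (θs + L), |(-E') θ| ≤ δ → 2 ≤ (-E'') θ := fun θ hθ hθδ ↦ by
    rw [Pi.neg_apply, abs_neg] at hθδ
    linarith [hconc θ hθ hθδ, Pi.neg_apply E'' θ]
  refine ⟨fun θ₁ hθ₁ θ₂ hθ₂ hM ↦ ?_, fun θ hθ ↦ ?_⟩
  · simpa only [Pi.neg_apply, neg_sub_neg, abs_sub_comm] using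
      sq_div_two_le_abs_sub_of_two_le_deriv2 hL hδ.le hnE' hnE'' hnsym hnconv hθ₁ hθ₂ hM
  · simpa only [Pi.neg_apply, abs_neg] using
      min_le_abs_deriv_of_two_le_deriv2 hL hδ.le hnE' hnE'' hnsym hnconv hθ

/-- Morse-type lemma: let `E` be `C²` on `[θ_s − L, θ_s + L]` (with derivative
data `E'`, `E''`), symmetric around `θ_s`, and suppose that `|E'(θ)| ≤ δ` forces `E''(θ) ≥ 2`
(uniformly of one sign, or `≤ −2`). Then
(i) `|E(θ₂) − E(θ₁)| ≥ M²/2` whenever `M = min(|θ₂ − θ₁|, |θ₂ + θ₁ − 2θ_s|) ≤ δ`, and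
(ii) `|E'(θ)| ≥ min(δ, |θ − θ_s|)`. -/
theorem statement15 (L θs δ : ℝ) (hL : 0 < L) (hδ : 0 < δ)
    (E E' E'' : ℝ → ℝ)
    (hE' : ∀ θ ∈ Set.Icc (θs - L) (θs + L),
      HasDerivWithinAt E (E' θ) (Set.Icc (θs - L) (θs + L)) θ)
    (hE'' : ∀ θ ∈ Set.Icc (θs - L) (θs + L),
      HasDerivWithinAt E' (E'' θ) (Set.Icc (θs - L) (θs + L)) θ)
    (hE''cont : ContinuousOn E'' (Set.Icc (θs - L) (θs + L)))
    (hsym : ∀ t ∈ Set.Icc (0 : ℝ) L, E (θs - t) = E (θs + t))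
    (hconv : (∀ θ ∈ Set.Icc (θs - L) (θs + L), |E' θ| ≤ δ → 2 ≤ E'' θ) ∨
             (∀ θ ∈ Set.Icc (θs - L) (θs + L), |E' θ| ≤ δ → E'' θ ≤ -2)) :
    (∀ θ₁ ∈ Set.Icc (θs - L) (θs + L), ∀ θ₂ ∈ Set.Icc (θs - L) (θs + L),
      min |θ₂ - θ₁| |θ₂ + θ₁ - 2 * θs| ≤ δ →
      (min |θ₂ - θ₁| |θ₂ + θ₁ - 2 * θs|) ^ 2 / 2 ≤ |E θ₂ - E θ₁|) ∧
    (∀ θ ∈ Set.Icc (θs - L) (θs + L), min δ |θ - θs| ≤ |E' θ|) :=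
  statement15_general L θs δ hL hδ E E' E'' hE' hE'' hsym hconv
end

section
/- (Eigenvalue counting via Green's function bounds.) Let a : ℤ^d × ℤ^d → ℝ satisfy a(x, y) = a(y, x) for all x, y, and for a finite set Λ ⊂ ℤ^d let H_Λ denote the symmetric matrix (a(x, y))_{x,y ∈ Λ}. Let E* ∈ ℝ, η > 0, M ∈ ℕ, and let Λ, Λ' ⊂ ℤ^d be finite sets with #(Λ \ Λ') + #(Λ' \ Λ) ≤ M. If H_{Λ'} − E* is invertible and ‖(H_{Λ'} − E*)⁻¹‖ ≤ (2η)⁻¹ in operator norm, then the number of eigenvalues of H_Λ in the interval [E* − η, E* + η], counted with multiplicity, is at most 3M. -/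
open scoped InnerProductSpace

/-!
Let `P` be the span of the eigenvectors of `H_Λ` with eigenvalues in `[E* - η, E* + η]`, so that
`‖(H_Λ - E*) v‖ ≤ η ‖v‖` on `P`. Take `v ∈ P` vanishing on `Λ \ Λ'` whose extension by zero `w` to
`Λ'` has `(H_Λ' - E*) w` vanishing on `Λ' \ Λ`. Then `(H_Λ' - E*) w` is the extension by zero of
`(H_Λ - E*) v`, so `‖v‖ = ‖w‖ ≤ (2η)⁻¹ ‖(H_Λ' - E*) w‖ ≤ ‖v‖ / 2` and `v = 0`. These are
`#(Λ \ Λ') + #(Λ' \ Λ)` linear conditions cutting `P` down to `0`, so `dim P ≤ M`.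
-/

open Finset Matrix

theorem Orthonormal.norm_sum_smul_sq {𝕜 E ι : Type*} [RCLike 𝕜] [NormedAddCommGroup E]
    [InnerProductSpace 𝕜 E] [Fintype ι] {b : ι → E} (hb : Orthonormal 𝕜 b) (c : ι → 𝕜) :
    ‖∑ i, c i • b i‖ ^ 2 = ∑ i, ‖c i‖ ^ 2 := by
  rw [@norm_sq_eq_re_inner 𝕜, hb.inner_sum, map_sum]
  simp [RCLike.conj_mul]

theorem Orthonormal.norm_apply_le_of_mem_span {𝕜 E ι F : Type*} [RCLike 𝕜]
    [NormedAddCommGroup E] [InnerProductSpace 𝕜 E] [Fintype ι] [FunLike F E E]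
    [LinearMapClass F 𝕜 E E] {b : ι → E} (hb : Orthonormal 𝕜 b) {T : F} {μ : ι → 𝕜}
    (hT : ∀ i, T (b i) = μ i • b i) {η : ℝ} (hη : 0 ≤ η) (hμ : ∀ i, ‖μ i‖ ≤ η)
    {v : E} (hv : v ∈ Submodule.span 𝕜 (Set.range b)) : ‖T v‖ ≤ η * ‖v‖ := by
  obtain ⟨c, rfl⟩ := (Submodule.mem_span_range_iff_exists_fun 𝕜).1 hv
  have hTv : T (∑ i, c i • b i) = ∑ i, (c i * μ i) • b i := by
    simp only [map_sum, map_smul, hT, smul_smul]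
  rw [← sq_le_sq₀ (norm_nonneg _) (by positivity), hTv, mul_pow, hb.norm_sum_smul_sq,
    hb.norm_sum_smul_sq, Finset.mul_sum]
  refine Finset.sum_le_sum fun i _ => ?_
  rw [norm_mul, mul_pow, mul_comm]
  gcongr
  exact hμ i

theorem Submodule.finrank_le_card_of_forall_eq_zero {K V ι : Type*} [Field K] [AddCommGroup V]
    [Module K V] [Fintype ι] (W : Submodule K V) (φ : ι → V →ₗ[K] K)
    (h : ∀ v ∈ W, (∀ i, φ i v = 0) → v = 0) : Module.finrank K W ≤ Fintype.card ι := by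
  have hinj : Function.Injective ((LinearMap.pi φ).domRestrict W) := by
    rw [← LinearMap.ker_eq_bot, LinearMap.ker_eq_bot']
    exact fun v hv => Subtype.ext (h v v.2 fun i => congrFun hv i)
  simpa using LinearMap.finrank_le_finrank_of_injective hinj

theorem Matrix.norm_le_norm_toEuclideanCLM_inv_mul {𝕜 n : Type*} [RCLike 𝕜] [Fintype n]
    [DecidableEq n] {B : Matrix n n 𝕜} (hB : IsUnit B) (x : EuclideanSpace 𝕜 n) :
    ‖x‖ ≤ ‖toEuclideanCLM (n := n) (𝕜 := 𝕜) B⁻¹‖ * ‖toEuclideanCLM (𝕜 := 𝕜) B x‖ := by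
  have hx : toEuclideanCLM (𝕜 := 𝕜) B⁻¹ (toEuclideanCLM (𝕜 := 𝕜) B x) = x := by
    rw [← mul_apply_eq_comp, ← map_mul, nonsing_inv_mul _ ((isUnit_iff_isUnit_det B).1 hB),
      map_one, one_apply_eq_self]
  calc ‖x‖ = _ := by rw [hx]
    _ ≤ _ := ContinuousLinearMap.le_opNorm _ _

section ExtendByZero

variable {𝕜 α : Type*} [RCLike 𝕜] [DecidableEq α]

def extendByZero (s t : Finset α) : EuclideanSpace 𝕜 s →ₗ[𝕜] EuclideanSpace 𝕜 t where
  toFun v := WithLp.toLp 2 fun y => if h : y.1 ∈ s then v ⟨y, h⟩ else 0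
  map_add' v w := by ext y; by_cases h : y.1 ∈ s <;> simp [h]
  map_smul' c v := by ext y; by_cases h : y.1 ∈ s <;> simp [h]

variable {s t : Finset α}

theorem extendByZero_apply (v : EuclideanSpace 𝕜 s) (y : t) :
    extendByZero s t v y = if h : y.1 ∈ s then v ⟨y, h⟩ else 0 :=
  rfl

theorem extendByZero_apply_of_mem (v : EuclideanSpace 𝕜 s) (y : t) (hy : y.1 ∈ s) :
    extendByZero s t v y = v ⟨y, hy⟩ :=
  dif_pos hy

theorem extendByZero_apply_of_notMem (v : EuclideanSpace 𝕜 s) (y : t) (hy : y.1 ∉ s) :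
    extendByZero s t v y = 0 :=
  dif_neg hy

theorem norm_extendByZero_le (v : EuclideanSpace 𝕜 s) : ‖extendByZero s t v‖ ≤ ‖v‖ := by
  set g : α → ℝ := fun z => if h : z ∈ s then ‖v ⟨z, h⟩‖ ^ 2 else 0
  have hnorm : ∀ u : Finset α, ∀ w : EuclideanSpace 𝕜 u, (∀ y : u, ‖w y‖ ^ 2 = g y) →
      ‖w‖ ^ 2 = ∑ z ∈ u, g z := fun u w hw => by
    rw [EuclideanSpace.norm_sq_eq, ← Finset.sum_coe_sort u]
    exact Finset.sum_congr rfl fun y _ => hw y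
  rw [← sq_le_sq₀ (norm_nonneg _) (norm_nonneg _),
    hnorm t _ fun y => by rw [extendByZero_apply]; split_ifs <;> simp [g, *],
    hnorm s v fun x => by simp [g]]
  calc ∑ z ∈ t, g z ≤ ∑ z ∈ s ∪ t, g z :=
        Finset.sum_le_sum_of_subset_of_nonneg subset_union_right fun z _ _ => by
          simp only [g]; split_ifs <;> positivity
    _ = ∑ z ∈ s, g z :=
        (Finset.sum_subset subset_union_left fun z _ hz => by simp [g, hz]).symm

theorem extendByZero_extendByZero {v : EuclideanSpace 𝕜 s} (hv : ∀ x : s, x.1 ∉ t → v x = 0) :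
    extendByZero t s (extendByZero s t v) = v := by
  ext x
  by_cases hx : x.1 ∈ t
  · rw [extendByZero_apply_of_mem _ x hx, extendByZero_apply_of_mem v ⟨x, hx⟩ x.2]
  · rw [extendByZero_apply_of_notMem _ _ hx, hv x hx]

theorem norm_extendByZero {v : EuclideanSpace 𝕜 s} (hv : ∀ x : s, x.1 ∉ t → v x = 0) :
    ‖extendByZero s t v‖ = ‖v‖ := by
  refine le_antisymm (norm_extendByZero_le v) ?_
  calc ‖v‖ = ‖extendByZero t s (extendByZero s t v)‖ := by rw [extendByZero_extendByZero hv]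
    _ ≤ ‖extendByZero s t v‖ := norm_extendByZero_le _

theorem sum_mul_extendByZero (f : α → 𝕜) {v : EuclideanSpace 𝕜 s}
    (hv : ∀ x : s, x.1 ∉ t → v x = 0) :
    ∑ y : t, f y * extendByZero s t v y = ∑ x : s, f x * v x := by
  set g : α → 𝕜 := fun z => f z * if h : z ∈ s then v ⟨z, h⟩ else 0
  have hg : ∀ z ∈ s ∪ t, z ∉ t → g z = 0 := fun z _ hzt => by
    by_cases hzs : z ∈ s
    · simp [g, hzs, hv ⟨z, hzs⟩ hzt]
    · simp [g, hzs]
  calc ∑ y : t, f y * extendByZero s t v y = ∑ z ∈ t, g z := Finset.sum_coe_sort t g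
    _ = ∑ z ∈ s, g z := by
        rw [Finset.sum_subset subset_union_right hg]
        exact (Finset.sum_subset subset_union_left fun z _ hzs => by simp [g, hzs]).symm
    _ = ∑ x : s, f x * v x := by
        rw [← Finset.sum_coe_sort s g]
        exact Finset.sum_congr rfl fun x _ => by simp [g]

end ExtendByZero

section KernelMatrix

variable {𝕜 α : Type*} [RCLike 𝕜] [DecidableEq α]

def kernelMatrix (A : α → α → 𝕜) (s : Finset α) : Matrix s s 𝕜 :=
  of fun x y => A x y

variable {s t : Finset α}

theorem toEuclideanCLM_kernelMatrix_sub_smul_extendByZero (A : α → α → 𝕜) (c : 𝕜)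
    {v : EuclideanSpace 𝕜 s} (hv : ∀ x : s, x.1 ∉ t → v x = 0)
    (hw : ∀ y : t, y.1 ∉ s →
      toEuclideanCLM (𝕜 := 𝕜) (kernelMatrix A t - c • 1) (extendByZero s t v) y = 0) :
    toEuclideanCLM (𝕜 := 𝕜) (kernelMatrix A t - c • 1) (extendByZero s t v) =
      extendByZero s t (toEuclideanCLM (𝕜 := 𝕜) (kernelMatrix A s - c • 1) v) := by
  ext y
  by_cases hy : y.1 ∈ s
  · rw [extendByZero_apply_of_mem _ _ hy]
    simp only [map_sub, map_smul, map_one, _root_.sub_apply,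
      _root_.smul_apply, one_apply_eq_self, PiLp.sub_apply,
      PiLp.smul_apply, ofLp_toEuclideanCLM, extendByZero_apply_of_mem _ _ hy]
    congr 1
    exact sum_mul_extendByZero (A y) hv
  · rw [hw y hy, extendByZero_apply_of_notMem _ _ hy]

theorem eq_zero_of_norm_inv_le (A : α → α → 𝕜) {c : 𝕜} {η : ℝ} (hη : 0 < η)
    (hinv : IsUnit (kernelMatrix A t - c • 1))
    (hbound : ‖toEuclideanCLM (n := t) (𝕜 := 𝕜) (kernelMatrix A t - c • 1)⁻¹‖ ≤ (2 * η)⁻¹)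
    {v : EuclideanSpace 𝕜 s}
    (hvη : ‖toEuclideanCLM (𝕜 := 𝕜) (kernelMatrix A s - c • 1) v‖ ≤ η * ‖v‖)
    (hv : ∀ x : s, x.1 ∉ t → v x = 0)
    (hw : ∀ y : t, y.1 ∉ s →
      toEuclideanCLM (𝕜 := 𝕜) (kernelMatrix A t - c • 1) (extendByZero s t v) y = 0) :
    v = 0 := by
  have hhalf : ‖v‖ ≤ ‖v‖ / 2 :=
    calc ‖v‖ = ‖extendByZero s t v‖ := (norm_extendByZero hv).symm
      _ ≤ ‖toEuclideanCLM (n := t) (𝕜 := 𝕜) (kernelMatrix A t - c • 1)⁻¹‖ *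
          ‖toEuclideanCLM (𝕜 := 𝕜) (kernelMatrix A t - c • 1) (extendByZero s t v)‖ :=
        norm_le_norm_toEuclideanCLM_inv_mul hinv _
      _ ≤ (2 * η)⁻¹ * ‖toEuclideanCLM (𝕜 := 𝕜) (kernelMatrix A s - c • 1) v‖ := by
        rw [toEuclideanCLM_kernelMatrix_sub_smul_extendByZero A c hv hw]
        gcongr
        exact norm_extendByZero_le _
      _ ≤ (2 * η)⁻¹ * (η * ‖v‖) := by gcongr
      _ = ‖v‖ / 2 := by field_simp
  exact norm_le_zero_iff.1 (by linarith)

end KernelMatrix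

theorem card_eigenvalues_mem_Icc_le {α : Type*} [DecidableEq α] (A : α → α → ℝ)
    {s t : Finset α} (hH : (kernelMatrix A s).IsHermitian) {E η : ℝ} (hη : 0 < η)
    (hinv : IsUnit (kernelMatrix A t - E • 1))
    (hbound : ‖toEuclideanCLM (n := t) (𝕜 := ℝ) (kernelMatrix A t - E • 1)⁻¹‖ ≤ (2 * η)⁻¹) :
    #{i | hH.eigenvalues i ∈ Set.Icc (E - η) (E + η)} ≤ #(s \ t) + #(t \ s) := by
  set B := hH.eigenvectorBasis
  let b : {i // hH.eigenvalues i ∈ Set.Icc (E - η) (E + η)} → EuclideanSpace ℝ s := fun i => B i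
  have hb : Orthonormal ℝ b := B.orthonormal.comp _ Subtype.val_injective
  have hBeig : ∀ i, toEuclideanCLM (𝕜 := ℝ) (kernelMatrix A s - E • 1) (b i) =
      (hH.eigenvalues i - E) • b i := fun i => by
    ext1
    simp [b, B, hH.mulVec_eigenvectorBasis, sub_smul]
  let φ : (s \ t : Finset α) ⊕ (t \ s : Finset α) → EuclideanSpace ℝ s →ₗ[ℝ] ℝ := Sum.elim
    (fun x => EuclideanSpace.projₗ ⟨x, (mem_sdiff.1 x.2).1⟩)
    (fun y => EuclideanSpace.projₗ (⟨y, (mem_sdiff.1 y.2).1⟩ : t) ∘ₗ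
      (toEuclideanCLM (𝕜 := ℝ) (kernelMatrix A t - E • 1) : _ →ₗ[ℝ] _) ∘ₗ extendByZero s t)
  calc #{i | hH.eigenvalues i ∈ Set.Icc (E - η) (E + η)}
      = Module.finrank ℝ (Submodule.span ℝ (Set.range b)) := by
        rw [finrank_span_eq_card hb.linearIndependent, Fintype.card_subtype]
    _ ≤ Fintype.card ((s \ t : Finset α) ⊕ (t \ s : Finset α)) :=
        Submodule.finrank_le_card_of_forall_eq_zero _ φ fun v hv hφ =>
          eq_zero_of_norm_inv_le A hη hinv hbound
            (hb.norm_apply_le_of_mem_span hBeig hη.le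
              (fun i => abs_sub_le_iff.2 ⟨by linarith [i.2.2], by linarith [i.2.1]⟩) hv)
            (fun x hx => hφ (.inl ⟨x, mem_sdiff.2 ⟨x.2, hx⟩⟩))
            (fun y hy => hφ (.inr ⟨y, mem_sdiff.2 ⟨y.2, hy⟩⟩))
    _ = #(s \ t) + #(t \ s) := by simp

theorem statement16_general {d : ℕ} (A : (Fin d → ℤ) → (Fin d → ℤ) → ℝ)
    (Es η : ℝ) (hη : 0 < η) (M : ℕ)
    (Λ Λ' : Finset (Fin d → ℤ))
    (hM : (Λ \ Λ').card + (Λ' \ Λ).card ≤ M)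
    (hherm : (Matrix.of fun x y : Λ => A x.1 y.1).IsHermitian)
    (hinv : IsUnit ((Matrix.of fun x y : Λ' => A x.1 y.1) - Es • 1))
    (hbound : ‖(Matrix.toEuclideanCLM (𝕜 := ℝ)
          (((Matrix.of fun x y : Λ' => A x.1 y.1) - Es • 1)⁻¹) :
        EuclideanSpace ℝ Λ' →L[ℝ] EuclideanSpace ℝ Λ')‖ ≤ (2 * η)⁻¹) :
    (Finset.univ.filter fun i : Λ =>
        hherm.eigenvalues i ∈ Set.Icc (Es - η) (Es + η)).card ≤ 3 * M :=
  (card_eigenvalues_mem_Icc_le A hherm hη hinv hbound).trans (hM.trans (by omega))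

/-- eigenvalue counting via Green's function bounds: let `a` be a symmetric
real kernel on `ℤ^d`, `Λ, Λ'` finite sets with `#(Λ \ Λ') + #(Λ' \ Λ) ≤ M`. If `H_{Λ'} − E*`
is invertible with inverse of norm at most `(2η)⁻¹`, then `H_Λ` has at most `3M` eigenvalues
(with multiplicity) in `[E* − η, E* + η]`. -/
theorem statement16 {d : ℕ} (A : (Fin d → ℤ) → (Fin d → ℤ) → ℝ)
    (hsymm : ∀ x y, A x y = A y x)
    (Es η : ℝ) (hη : 0 < η) (M : ℕ)
    (Λ Λ' : Finset (Fin d → ℤ))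
    (hM : (Λ \ Λ').card + (Λ' \ Λ).card ≤ M)
    (hherm : (Matrix.of fun x y : Λ => A x.1 y.1).IsHermitian)
    (hinv : IsUnit ((Matrix.of fun x y : Λ' => A x.1 y.1) - Es • 1))
    (hbound : ‖(Matrix.toEuclideanCLM (𝕜 := ℝ)
          (((Matrix.of fun x y : Λ' => A x.1 y.1) - Es • 1)⁻¹) :
        EuclideanSpace ℝ Λ' →L[ℝ] EuclideanSpace ℝ Λ')‖ ≤ (2 * η)⁻¹) :
    (Finset.univ.filter fun i : Λ =>
        hherm.eigenvalues i ∈ Set.Icc (Es - η) (Es + η)).card ≤ 3 * M :=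
  statement16_general A Es η hη M Λ Λ' hM hherm hinv hbound
end
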